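/- arXiv:1610.07029 — 5 statements merged into one kernel-verified Lean document; each statement's English description precedes it below -/
import Mathlib

section
/- Let A be a 2×2 expanding integer matrix with characteristic polynomial f(x) = x² + px + q and Δ = p² − 4q ≥ 0, and let v ∈ ℤ² be such that {v, Av} is linearly independent over ℝ. Define α_i, β_i by A^{−i}v = α_i v + β_i Av, and set α̃ = ∑_{i=1}^∞ |α_i| and β̃ = ∑_{i=1}^∞ |β_i|. Then: if q > 0, α̃ = (|p| − 1)/(q − |p| + 1) and β̃ = 1/(q − |p| + 1); if q < 0, α̃ = (|p| + 1)/(|q| − |p| − 1) and β̃ = 1/(|q| − |p| − 1). -/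
open Matrix Polynomial Pointwise

noncomputable section

/-- The real matrix obtained from a 2×2 integer matrix. -/
def toR (A : Matrix (Fin 2) (Fin 2) ℤ) : Matrix (Fin 2) (Fin 2) ℝ :=
  A.map (Int.cast : ℤ → ℝ)

/-- The real vector obtained from an integer vector. -/
def vecR (v : Fin 2 → ℤ) : Fin 2 → ℝ := fun j => (v j : ℝ)

/-- A 2×2 integer matrix is expanding if every complex eigenvalue has modulus > 1. -/
def IsExpanding (A : Matrix (Fin 2) (Fin 2) ℤ) : Prop :=
  ∀ z ∈ spectrum ℂ (A.map (Int.cast : ℤ → ℂ)), 1 < ‖z‖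

/-- The self-affine fractal `T(A, D v)`, i.e. the set of all sums
`∑_{i=1}^∞ A^{-i} (d_i v)` with digits `d_i ∈ D`. -/
def attractor (A : Matrix (Fin 2) (Fin 2) ℤ) (D : Set ℤ) (v : Fin 2 → ℤ) :
    Set (Fin 2 → ℝ) :=
  { x | ∃ d : ℕ → ℤ, (∀ i, d i ∈ D) ∧
      HasSum (fun i : ℕ => (d i : ℝ) • ((toR A)⁻¹ ^ (i + 1)).mulVec (vecR v)) x }

/-!
With `r, s` the reciprocals of the (real) eigenvalues of `A`, Cayley–Hamilton reads
`1 - (r + s) A + r s A² = 0`, so `A⁻¹ = (r + s) - r s A` and, by induction,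
`A⁻ⁿ v = hₙ(r, s) v - r s hₙ₋₁(r, s) A v`, where `hₙ` is the complete homogeneous symmetric
polynomial of degree `n` in two variables. Replacing `(r, s)` by `(-r, -s)` only changes the
sign of `hₙ`, and once `r + s ≥ 0` every `hₙ(r, s)` is nonnegative; hence `∑ |hₙ(r, s)|` is the
Cauchy product of two geometric series, `1 / (1 - |r + s| + r s)`. Substituting
`r + s = -p / q` and `r s = 1 / q` gives the formulas.
-/

open Finset

def hsymm₂ {R : Type*} [CommSemiring R] (r s : R) (n : ℕ) : R :=
  ∑ k ∈ range (n + 1), r ^ k * s ^ (n - k)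

section CommRing

variable {R : Type*} [CommRing R] (r s : R)

@[simp] lemma hsymm₂_zero : hsymm₂ r s 0 = 1 := by simp [hsymm₂]

@[simp] lemma hsymm₂_one : hsymm₂ r s 1 = r + s := by
  simp [hsymm₂, sum_range_succ, add_comm]

lemma hsymm₂_succ (n : ℕ) : hsymm₂ r s (n + 1) = r * hsymm₂ r s n + s ^ (n + 1) := by
  rw [hsymm₂, sum_range_succ', hsymm₂, mul_sum]
  simp [pow_succ', mul_assoc]

lemma hsymm₂_add_two (n : ℕ) :
    hsymm₂ r s (n + 2) = (r + s) * hsymm₂ r s (n + 1) - r * s * hsymm₂ r s n := by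
  linear_combination hsymm₂_succ r s (n + 1) - s * hsymm₂_succ r s n

lemma hsymm₂_neg (n : ℕ) : hsymm₂ (-r) (-s) n = (-1) ^ n * hsymm₂ r s n := by
  rw [hsymm₂, hsymm₂, mul_sum]
  refine sum_congr rfl fun k hk => ?_
  have hkn : k + (n - k) = n := Nat.add_sub_cancel' (Nat.lt_succ_iff.mp (mem_range.mp hk))
  have hsign : (-1 : R) ^ n = (-1) ^ k * (-1) ^ (n - k) := by rw [← pow_add, hkn]
  rw [neg_pow r, neg_pow s, hsign]
  ring

end CommRing

lemma hsymm₂_nonneg {R : Type*} [CommRing R] [LinearOrder R] [IsStrictOrderedRing R]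
    {r s : R} (h : 0 ≤ r + s) (n : ℕ) : 0 ≤ hsymm₂ r s n := by
  by_cases hrs : r * s ≤ 0
  · -- the recurrence `hsymm₂_add_two` then has nonnegative coefficients
    suffices ∀ n, 0 ≤ hsymm₂ r s n ∧ 0 ≤ hsymm₂ r s (n + 1) from (this n).1
    intro n
    induction n with
    | zero => simpa using h
    | succ n ih =>
      refine ⟨ih.2, ?_⟩
      rw [hsymm₂_add_two]
      nlinarith [mul_nonneg h ih.2, mul_nonneg (neg_nonneg.mpr hrs) ih.1]
  · have hr : 0 ≤ r := by nlinarith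
    have hs : 0 ≤ s := by nlinarith
    exact sum_nonneg fun k _ => by positivity

lemma hasSum_hsymm₂ {K : Type*} [NormedField K] [CompleteSpace K] {r s : K}
    (hr : ‖r‖ < 1) (hs : ‖s‖ < 1) :
    HasSum (hsymm₂ r s) ((1 - r)⁻¹ * (1 - s)⁻¹) := by
  rw [← tsum_geometric_of_norm_lt_one hr, ← tsum_geometric_of_norm_lt_one hs]
  exact hasSum_sum_range_mul_of_summable_norm
    (summable_norm_geometric_of_norm_lt_one hr) (summable_norm_geometric_of_norm_lt_one hs)

lemma hasSum_abs_hsymm₂ {r s : ℝ} (hr : |r| < 1) (hs : |s| < 1) :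
    HasSum (fun n => |hsymm₂ r s n|) (1 - |r + s| + r * s)⁻¹ := by
  have key : ∀ {r s : ℝ}, |r| < 1 → |s| < 1 → 0 ≤ r + s →
      HasSum (fun n => |hsymm₂ r s n|) (1 - (r + s) + r * s)⁻¹ := by
    intro r s hr hs h
    have := hasSum_hsymm₂ (K := ℝ) hr hs
    rw [← mul_inv, show (1 - r) * (1 - s) = 1 - (r + s) + r * s by ring] at this
    simpa [abs_of_nonneg (hsymm₂_nonneg h _)] using this
  rcases le_total 0 (r + s) with h | h
  · simpa [abs_of_nonneg h] using key hr hs h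
  · have := key (r := -r) (s := -s) (by rwa [abs_neg]) (by rwa [abs_neg]) (by linarith)
    simp only [hsymm₂_neg, abs_mul, abs_pow, abs_neg, abs_one, one_pow, one_mul] at this
    convert this using 2
    rw [abs_of_nonpos h]
    ring

section Matrix

variable {m K : Type*} [Fintype m] [DecidableEq m] [Field K] {B : Matrix m m K} {r s : K}

lemma inv_pow_succ_mulVec (hB : 1 - (r + s) • B + (r * s) • B ^ 2 = 0) (v : m → K) (n : ℕ) :
    (B⁻¹ ^ (n + 1)) *ᵥ v = hsymm₂ r s (n + 1) • v - (r * s * hsymm₂ r s n) • (B *ᵥ v) := by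
  have hright : B * ((r + s) • 1 - (r * s) • B) = 1 := by
    rw [mul_sub, mul_smul_comm, mul_smul_comm, mul_one, ← sq]
    linear_combination (norm := module) -hB
  have hinv : B⁻¹ = (r + s) • 1 - (r * s) • B := Matrix.inv_eq_right_inv hright
  have hinvB : B⁻¹ *ᵥ (B *ᵥ v) = v := by
    rw [mulVec_mulVec, hinv, mul_eq_one_comm.mp hright, one_mulVec]
  have hinvv : B⁻¹ *ᵥ v = (r + s) • v - (r * s) • (B *ᵥ v) := by
    rw [hinv, sub_mulVec, smul_mulVec, smul_mulVec, one_mulVec]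
  induction n with
  | zero => simp [hinvv]
  | succ n ih =>
    rw [pow_succ', ← mulVec_mulVec, ih, mulVec_sub, mulVec_smul, mulVec_smul, hinvB, hinvv,
      hsymm₂_add_two]
    module

lemma coeffs_inv_pow_succ_eq_hsymm₂ (hB : 1 - (r + s) • B + (r * s) • B ^ 2 = 0)
    {v : m → K} (hv : LinearIndependent K ![v, B *ᵥ v]) {α β : ℕ → K}
    (hαβ : ∀ i : ℕ, 1 ≤ i → (B⁻¹ ^ i) *ᵥ v = α i • v + β i • B *ᵥ v) (n : ℕ) :
    α (n + 1) = hsymm₂ r s (n + 1) ∧ β (n + 1) = -(r * s * hsymm₂ r s n) :=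
  hv.eq_of_pair <| by
    rw [← hαβ (n + 1) (Nat.le_add_left 1 n), inv_pow_succ_mulVec hB, neg_smul, ← sub_eq_add_neg]

end Matrix

lemma exists_add_eq_mul_eq_of_sq_sub_nonneg {p q : ℝ} (h : 0 ≤ p ^ 2 - 4 * q) :
    ∃ l m : ℝ, l + m = -p ∧ l * m = q := by
  refine ⟨(-p + √(p ^ 2 - 4 * q)) / 2, (-p - √(p ^ 2 - 4 * q)) / 2, by ring, ?_⟩
  linear_combination (-1 / 4 : ℝ) * Real.sq_sqrt h

lemma IsExpanding.one_lt_abs {A : Matrix (Fin 2) (Fin 2) ℤ} (hA : IsExpanding A) {t : ℝ}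
    (ht : aeval t A.charpoly = 0) : 1 < |t| := by
  have hmem : (t : ℂ) ∈ spectrum ℂ (A.map (Int.cast : ℤ → ℂ)) := by
    rw [Matrix.mem_spectrum_iff_isRoot_charpoly, IsRoot,
      show A.map (Int.cast : ℤ → ℂ) = A.map (algebraMap ℤ ℂ) from rfl, Matrix.charpoly_map,
      eval_map_algebraMap, ← Complex.coe_algebraMap, aeval_algebraMap_apply, ht, map_zero]
  simpa using hA _ hmem

lemma IsExpanding.exists_reciprocal_roots {A : Matrix (Fin 2) (Fin 2) ℤ} {p q : ℤ}
    (hA : IsExpanding A) (hchar : A.charpoly = X ^ 2 + C p * X + C q)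
    (hΔ : 0 ≤ p ^ 2 - 4 * q) :
    ∃ r s : ℝ, |r| < 1 ∧ |s| < 1 ∧ (q : ℝ) * (r + s) = -p ∧ (q : ℝ) * (r * s) = 1 := by
  obtain ⟨l, m, hsum, hprod⟩ :=
    exists_add_eq_mul_eq_of_sq_sub_nonneg (p := p) (q := q) (by exact_mod_cast hΔ)
  have hroot (t : ℝ) (ht : t ^ 2 + p * t + q = 0) : 1 < |t| := hA.one_lt_abs <| by
    simpa only [hchar, eq_intCast, map_add, map_pow, aeval_X, map_mul, map_intCast] using ht
  have hl := hroot l (by linear_combination l * hsum - hprod)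
  have hm := hroot m (by linear_combination m * hsum - hprod)
  have hl0 : l ≠ 0 := abs_pos.mp (by linarith)
  have hm0 : m ≠ 0 := abs_pos.mp (by linarith)
  refine ⟨l⁻¹, m⁻¹, ?_, ?_, ?_, ?_⟩
  · rw [abs_inv]; exact inv_lt_one_of_one_lt₀ hl
  · rw [abs_inv]; exact inv_lt_one_of_one_lt₀ hm
  · rw [← hprod]; field_simp; linarith
  · rw [← hprod]; field_simp

lemma one_sub_smul_toR_add_smul_sq_eq_zero {A : Matrix (Fin 2) (Fin 2) ℤ} {p q : ℤ} {r s : ℝ}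
    (hchar : A.charpoly = X ^ 2 + C p * X + C q)
    (hsum : (q : ℝ) * (r + s) = -p) (hprod : (q : ℝ) * (r * s) = 1) :
    1 - (r + s) • toR A + (r * s) • toR A ^ 2 = 0 := by
  have hCH : toR A ^ 2 + (p : ℝ) • toR A + (q : ℝ) • 1 = 0 := by
    have := Matrix.aeval_self_charpoly (toR A)
    rw [toR, show A.map (Int.cast : ℤ → ℝ) = A.map (algebraMap ℤ ℝ) from rfl,
      Matrix.charpoly_map, aeval_map_algebraMap, hchar] at this
    simpa [toR, Algebra.algebraMap_eq_smul_one, Algebra.smul_def] using this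
  linear_combination (norm := module) (r * s) • hCH - hprod • (1 - (r + s) • toR A)
    - (r * s) • hsum • toR A

/-- exact values of `α̃ = ∑_{i≥1} |α_i|` and `β̃ = ∑_{i≥1} |β_i|`
when `Δ = p² - 4q ≥ 0`. -/
theorem stmt6 (A : Matrix (Fin 2) (Fin 2) ℤ) (p q : ℤ)
    (hA : IsExpanding A)
    (hchar : A.charpoly = X ^ 2 + C p * X + C q)
    (hΔ : 0 ≤ p ^ 2 - 4 * q)
    (v : Fin 2 → ℤ)
    (hv : LinearIndependent ℝ ![vecR v, (toR A).mulVec (vecR v)])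
    (α β : ℕ → ℝ)
    (hαβ : ∀ i : ℕ, 1 ≤ i →
      ((toR A)⁻¹ ^ i).mulVec (vecR v) = α i • vecR v + β i • (toR A).mulVec (vecR v)) :
    (0 < q →
      (∑' i : ℕ, |α (i + 1)|) = ((|p| : ℝ) - 1) / ((q : ℝ) - (|p| : ℝ) + 1) ∧
      (∑' i : ℕ, |β (i + 1)|) = 1 / ((q : ℝ) - (|p| : ℝ) + 1)) ∧
    (q < 0 →
      (∑' i : ℕ, |α (i + 1)|) = ((|p| : ℝ) + 1) / ((|q| : ℝ) - (|p| : ℝ) - 1) ∧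
      (∑' i : ℕ, |β (i + 1)|) = 1 / ((|q| : ℝ) - (|p| : ℝ) - 1)) := by
  obtain ⟨r, s, hr, hs, hsum, hprod⟩ := hA.exists_reciprocal_roots hchar hΔ
  have hcoord := coeffs_inv_pow_succ_eq_hsymm₂
    (one_sub_smul_toR_add_smul_sq_eq_zero hchar hsum hprod) hv hαβ
  set D := 1 - |r + s| + r * s
  have hβ : HasSum (fun n => |β (n + 1)|) (|r * s| * D⁻¹) := by
    simpa [hcoord, abs_mul] using (hasSum_abs_hsymm₂ hr hs).mul_left |r * s|
  have hα : HasSum (fun n => |α (n + 1)|) (D⁻¹ - 1) := by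
    simpa [hcoord] using (hasSum_nat_add_iff' 1).mpr (hasSum_abs_hsymm₂ hr hs)
  have hD : 0 < D := inv_pos.mp (by linarith [hα.nonneg fun _ => abs_nonneg _])
  have hQ : 0 < |(q : ℝ)| := abs_pos.mpr (left_ne_zero_of_mul_eq_one hprod)
  have hQD : |(q : ℝ)| * D = |(q : ℝ)| - |(p : ℝ)| + |(q : ℝ)| * (r * s) := by
    rw [← abs_neg (p : ℝ), ← hsum, abs_mul]; ring
  have hβsum : |r * s| * D⁻¹ = 1 / (|(q : ℝ)| * D) := by
    have habs_prod : |(q : ℝ)| * |r * s| = 1 := by rw [← abs_mul, hprod, abs_one]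
    field_simp
    linear_combination habs_prod
  rw [hβ.tsum_eq, hα.tsum_eq, hβsum,
    show D⁻¹ - 1 = (|(q : ℝ)| - |(q : ℝ)| * D) / (|(q : ℝ)| * D) by field_simp, hQD]
  refine ⟨fun hq => ?_, fun hq => ?_⟩
  · rw [abs_of_pos (show (0 : ℝ) < q by exact_mod_cast hq), hprod]
    constructor <;> ring
  · rw [abs_of_neg (show (q : ℝ) < 0 by exact_mod_cast hq), neg_mul, hprod]
    constructor <;> ring
end
end

section
/- Let A be a 2×2 expanding integer matrix with characteristic polynomial f(x) = x² + px + q and Δ = p² − 4q < 0 (so q > 0), and let v ∈ ℤ² be such that {v, Av} is linearly independent over ℝ. Define α_i, β_i by A^{−i}v = α_i v + β_i Av. Then for all i ≥ 1, |α_i| ≤ 2q^{−(i−1)/2}/(4q − p²)^{1/2} and |β_i| ≤ 2q^{−i/2}/(4q − p²)^{1/2}. -/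
/-!
Let `μ` be the root of `x² + px + q` in the upper half plane, so `|μ|² = q` and
`Im μ = √(4q - p²)/2`. Sending `v ↦ 1` and `Av ↦ μ` extends to a real-linear map `φ : ℝ² → ℂ`
with `φ ∘ A = μ φ`, because `A` and `μ` satisfy the same quadratic relation. Applying `φ` to
`A^{-i}v = α_i v + β_i Av` gives `α_i + β_i μ = μ^{-i}`, a complex number of modulus `q^{-i/2}`.
Its imaginary part is `β_i Im μ`, and the imaginary part of `μ̄ (α_i + β_i μ)` is `-α_i Im μ`.
-/

open Matrix Polynomial Pointwise

noncomputable section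

section Intertwining

variable {K L V : Type*} [Field K] [CommRing L] [Algebra K L] [AddCommGroup V] [Module K V]

theorem Module.Basis.constr_apply_eq_mul_of_aeval_eq_zero
    {T : Module.End K V} {p q : K} (hT : aeval T (X ^ 2 + C p * X + C q) = 0)
    (b : Module.Basis (Fin 2) K V) (hb : T (b 0) = b 1)
    {μ : L} (hμ : aeval μ (X ^ 2 + C p * X + C q) = 0) (x : V) :
    b.constr K ![1, μ] (T x) = μ * b.constr K ![1, μ] x := by
  suffices (b.constr K ![1, μ]).comp T = (LinearMap.mulLeft K μ).comp (b.constr K ![1, μ]) from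
    LinearMap.congr_fun this x
  have hT₂ : T (T (b 0)) = -(p • T (b 0)) - q • b 0 := by
    have := LinearMap.congr_fun hT (b 0)
    simp only [map_add, aeval_X, aeval_C, Algebra.algebraMap_eq_smul_one,
      _root_.map_mul, LinearMap.add_apply, LinearMap.smul_apply, Module.End.one_apply,
      Module.End.mul_apply, pow_two, LinearMap.zero_apply] at this
    rw [← sub_eq_zero, ← this]
    abel
  have hμ₂ : μ * μ = -(p • μ) - q • 1 := by
    simp only [map_add, map_pow, aeval_X, aeval_C, _root_.map_mul] at hμ
    rw [Algebra.smul_def, Algebra.smul_def, mul_one]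
    linear_combination hμ
  refine b.ext (Fin.forall_fin_two.2 ⟨?_, ?_⟩)
  · simp [hb, b.constr_basis]
  · rw [LinearMap.comp_apply, ← hb, hT₂, map_sub, map_neg, map_smul, map_smul, hb,
      b.constr_basis, b.constr_basis]
    simp [hμ₂]

theorem Module.Basis.constr_apply_pow_eq_mul_of_aeval_eq_zero
    {T : Module.End K V} {p q : K} (hT : aeval T (X ^ 2 + C p * X + C q) = 0)
    (b : Module.Basis (Fin 2) K V) (hb : T (b 0) = b 1)
    {μ : L} (hμ : aeval μ (X ^ 2 + C p * X + C q) = 0) (n : ℕ) (x : V) :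
    b.constr K ![1, μ] ((T ^ n) x) = μ ^ n * b.constr K ![1, μ] x := by
  induction n with
  | zero => simp
  | succ n ih =>
    rw [pow_succ', Module.End.mul_apply,
      b.constr_apply_eq_mul_of_aeval_eq_zero hT hb hμ, ih, pow_succ', mul_assoc]

end Intertwining

section ComplexRoot

open Complex ComplexConjugate

/-- The root of `X ^ 2 + p X + q` with positive imaginary part when `p ^ 2 < 4 q`. -/
def upperRoot (p q : ℝ) : ℂ := ⟨-p / 2, √(4 * q - p ^ 2) / 2⟩

variable {p q : ℝ}

theorem upperRoot_im (p q : ℝ) : (upperRoot p q).im = √(4 * q - p ^ 2) / 2 := rfl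

theorem upperRoot_sq_add (h : p ^ 2 < 4 * q) :
    upperRoot p q ^ 2 + p * upperRoot p q + q = 0 := by
  have hsq := Real.mul_self_sqrt (show 0 ≤ 4 * q - p * p by nlinarith)
  apply Complex.ext <;>
    simp only [upperRoot, pow_two, add_re, add_im, mul_re, mul_im, ofReal_re, ofReal_im,
      zero_re, zero_im, zero_mul, sub_zero, add_zero] <;>
    nlinarith

theorem normSq_upperRoot (h : p ^ 2 < 4 * q) : normSq (upperRoot p q) = q := by
  have hsq := Real.sq_sqrt (sub_nonneg.2 h.le)
  simp only [upperRoot, normSq_apply]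
  nlinarith

theorem abs_mul_abs_im_le_norm_add_mul (a c : ℝ) (μ : ℂ) : |c| * |μ.im| ≤ ‖(a + c * μ : ℂ)‖ := by
  simpa [abs_mul] using abs_im_le_norm (a + c * μ)

theorem abs_mul_abs_im_le_norm_mul_norm_add_mul (a c : ℝ) (μ : ℂ) :
    |a| * |μ.im| ≤ ‖μ‖ * ‖(a + c * μ : ℂ)‖ := by
  have him : (conj μ * (a + c * μ)).im = -(a * μ.im) := by
    simp only [mul_im, mul_re, add_im, add_re, conj_re, conj_im, ofReal_re, ofReal_im,
      zero_mul, add_zero, zero_add, sub_zero, neg_mul]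
    ring
  simpa [him, abs_mul] using abs_im_le_norm (conj μ * (a + c * μ))

end ComplexRoot

theorem Real.inv_sqrt_pow_eq_rpow {q : ℝ} (hq : 0 ≤ q) (i : ℕ) :
    (√q ^ i)⁻¹ = q ^ (-(i : ℝ) / 2) := by
  rw [Real.sqrt_eq_rpow, ← Real.rpow_natCast, ← Real.rpow_mul hq, ← Real.rpow_neg hq]
  ring_nf

theorem Real.sqrt_mul_inv_sqrt_pow_eq_rpow {q : ℝ} (hq : 0 < q) (i : ℕ) :
    √q * (√q ^ i)⁻¹ = q ^ (-((i : ℝ) - 1) / 2) := by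
  rw [Real.inv_sqrt_pow_eq_rpow hq.le, Real.sqrt_eq_rpow, ← Real.rpow_add hq]
  ring_nf

theorem Matrix.det_eq_of_charpoly_eq {R : Type*} [CommRing R] {B : Matrix (Fin 2) (Fin 2) R}
    {p q : R} (hchar : B.charpoly = X ^ 2 + C p * X + C q) : B.det = q := by
  simp [det_eq_sign_charpoly_coeff, hchar]

theorem upperRoot_pow_mul_eq_one {B : Matrix (Fin 2) (Fin 2) ℝ} {p q : ℝ}
    (hchar : B.charpoly = X ^ 2 + C p * X + C q) (hpq : p ^ 2 < 4 * q) {u : Fin 2 → ℝ}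
    (hu : LinearIndependent ℝ ![u, B *ᵥ u]) {i : ℕ} {a c : ℝ}
    (h : B⁻¹ ^ i *ᵥ u = a • u + c • B *ᵥ u) :
    upperRoot p q ^ i * (a + c * upperRoot p q) = 1 := by
  have hμ : aeval (upperRoot p q) (X ^ 2 + C p * X + C q) = 0 := by
    simpa using upperRoot_sq_add hpq
  have hT : aeval (toLin' B) (X ^ 2 + C p * X + C q) = 0 := by
    simpa [hchar] using LinearMap.aeval_self_charpoly (toLin' B)
  let b := basisOfLinearIndependentOfCardEqFinrank hu (by simp)
  have hb0 : b 0 = u := by simp [b]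
  have hb1 : b 1 = B *ᵥ u := by simp [b]
  have hb : toLin' B (b 0) = b 1 := by rw [hb0, hb1, toLin'_apply]
  have hx : B ^ i *ᵥ (B⁻¹ ^ i *ᵥ u) = u := by
    have hdet : IsUnit B.det := by
      rw [det_eq_of_charpoly_eq hchar]
      exact (by nlinarith [sq_nonneg p] : (0 : ℝ) < q).ne'.isUnit
    rw [mulVec_mulVec, inv_pow', mul_nonsing_inv _ (det_pow B i ▸ hdet.pow i), one_mulVec]
  have := b.constr_apply_pow_eq_mul_of_aeval_eq_zero hT hb hμ i (B⁻¹ ^ i *ᵥ u)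
  rw [← toLin'_pow, toLin'_apply, hx, h, ← hb1, ← hb0, map_add, map_smul, map_smul,
    b.constr_basis, b.constr_basis] at this
  simpa using this.symm

theorem abs_le_of_upperRoot_pow_mul_eq_one {p q : ℝ} (hpq : p ^ 2 < 4 * q) {i : ℕ} {a c : ℝ}
    (h : upperRoot p q ^ i * (a + c * upperRoot p q) = 1) :
    |a| ≤ 2 * q ^ (-((i : ℝ) - 1) / 2) / √(4 * q - p ^ 2) ∧
      |c| ≤ 2 * q ^ (-(i : ℝ) / 2) / √(4 * q - p ^ 2) := by
  set μ := upperRoot p q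
  have hq : 0 < q := by nlinarith [sq_nonneg p]
  have hμnorm : ‖μ‖ = √q := by rw [Complex.norm_def, normSq_upperRoot hpq]
  have hnorm : ‖(a + c * μ : ℂ)‖ = (√q ^ i)⁻¹ := by
    rw [← hμnorm, ← norm_pow]
    exact eq_inv_of_mul_eq_one_right (by rw [← norm_mul, h, norm_one])
  have hD : 0 < √(4 * q - p ^ 2) := Real.sqrt_pos.2 (by linarith)
  have him : |μ.im| = √(4 * q - p ^ 2) / 2 := by
    rw [upperRoot_im, abs_of_pos (by positivity)]
  constructor
  · rw [← Real.sqrt_mul_inv_sqrt_pow_eq_rpow hq, le_div_iff₀ hD]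
    have := abs_mul_abs_im_le_norm_mul_norm_add_mul a c μ
    rw [him, hnorm, hμnorm] at this
    linarith
  · rw [← Real.inv_sqrt_pow_eq_rpow hq.le, le_div_iff₀ hD]
    have := abs_mul_abs_im_le_norm_add_mul a c μ
    rw [him, hnorm] at this
    linarith

theorem charpoly_toR {A : Matrix (Fin 2) (Fin 2) ℤ} {p q : ℤ}
    (hchar : A.charpoly = X ^ 2 + C p * X + C q) :
    (toR A).charpoly = X ^ 2 + C (p : ℝ) * X + C (q : ℝ) := by
  simpa [toR, hchar] using A.charpoly_map (Int.castRingHom ℝ)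

theorem stmt7_general (A : Matrix (Fin 2) (Fin 2) ℤ) (p q : ℤ)
    (hchar : A.charpoly = X ^ 2 + C p * X + C q)
    (hΔ : p ^ 2 - 4 * q < 0)
    (v : Fin 2 → ℤ)
    (hv : LinearIndependent ℝ ![vecR v, (toR A).mulVec (vecR v)])
    (α β : ℕ → ℝ)
    (hαβ : ∀ i : ℕ, 1 ≤ i →
      ((toR A)⁻¹ ^ i).mulVec (vecR v) = α i • vecR v + β i • (toR A).mulVec (vecR v)) :
    ∀ i : ℕ, 1 ≤ i →
      |α i| ≤ 2 * (q : ℝ) ^ (-(((i : ℝ) - 1)) / 2) / Real.sqrt (4 * (q : ℝ) - (p : ℝ) ^ 2) ∧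
      |β i| ≤ 2 * (q : ℝ) ^ (-(i : ℝ) / 2) / Real.sqrt (4 * (q : ℝ) - (p : ℝ) ^ 2) := by
  intro i hi
  have hpq : (p : ℝ) ^ 2 < 4 * q := by exact_mod_cast (by linarith : p ^ 2 < 4 * q)
  exact abs_le_of_upperRoot_pow_mul_eq_one hpq
    (upperRoot_pow_mul_eq_one (charpoly_toR hchar) hpq hv (hαβ i hi))

/-- bounds on `|α_i|` and `|β_i|` when `Δ = p² - 4q < 0` (so `q > 0`). -/
theorem stmt7 (A : Matrix (Fin 2) (Fin 2) ℤ) (p q : ℤ)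
    (hA : IsExpanding A)
    (hchar : A.charpoly = X ^ 2 + C p * X + C q)
    (hΔ : p ^ 2 - 4 * q < 0)
    (v : Fin 2 → ℤ)
    (hv : LinearIndependent ℝ ![vecR v, (toR A).mulVec (vecR v)])
    (α β : ℕ → ℝ)
    (hαβ : ∀ i : ℕ, 1 ≤ i →
      ((toR A)⁻¹ ^ i).mulVec (vecR v) = α i • vecR v + β i • (toR A).mulVec (vecR v)) :
    ∀ i : ℕ, 1 ≤ i →
      |α i| ≤ 2 * (q : ℝ) ^ (-(((i : ℝ) - 1)) / 2) / Real.sqrt (4 * (q : ℝ) - (p : ℝ) ^ 2) ∧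
      |β i| ≤ 2 * (q : ℝ) ^ (-(i : ℝ) / 2) / Real.sqrt (4 * (q : ℝ) - (p : ℝ) ^ 2) :=
  stmt7_general A p q hchar hΔ v hv α β hαβ
end
end

section
/- Let A be a 2×2 expanding integer matrix with characteristic polynomial f(x) = x² + px + q where |q| − |p| − 1 > 0, and let v ∈ ℤ² be such that {v, Av} is linearly independent over ℝ. Define α_i, β_i by A^{−i}v = α_i v + β_i Av, and set α̃ = ∑_{i=1}^∞ |α_i|, β̃ = ∑_{i=1}^∞ |β_i|. Then (|q| − |p| − 1)·β̃ ≤ 1, and (|q| − |p| − 1)·α̃ ≤ (|q| − |p|)·|p|/|q| + |p² − q|/|q|; in particular, when q > 0 and p ≥ 1, α̃ ≤ (p − 1)/(q − p − 1) if p² ≥ q, and α̃ ≤ (qp − 2p² + q)/(q(q − p − 1)) if p² < q. -/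
open Matrix Polynomial Pointwise

noncomputable section

/-! Cayley–Hamilton gives `q A⁻² + p A⁻¹ + 1 = 0`, so the vectors `A⁻ⁱ v`, and with them (by the
linear independence of `v, Av`) the coefficients `αᵢ` and `βᵢ`, satisfy the recurrence
`q xᵢ₊₂ + p xᵢ₊₁ + xᵢ = 0`, while `q A⁻¹ + p + A = 0` determines `α₁, β₁, α₂, β₂`. In absolute
values `|q| |xᵢ₊₂| ≤ |p| |xᵢ₊₁| + |xᵢ|`; summing over `i` gives
`(|q| - |p| - 1) ∑ |xᵢ| ≤ (|q| - |p|) |x₁| + |q| |x₂|`, and the stated bounds are this inequality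
with the explicit values of `x₁, x₂`. -/

theorem mul_tsum_le_of_two_step_bound {P Q : ℝ} (hP : 0 ≤ P) (hPQ : P + 1 ≤ Q) {f : ℕ → ℝ}
    (hf : ∀ i, 0 ≤ f i) (hrec : ∀ i, Q * f (i + 2) ≤ P * f (i + 1) + f i) :
    (Q - P - 1) * ∑' i, f i ≤ (Q - P) * f 0 + Q * f 1 := by
  -- the left side is non-increasing in `n`, and equals the right side at `n = 0`
  have hpartial : ∀ n, (Q - P - 1) * ∑ i ∈ Finset.range n, f i + (Q - P) * f n + Q * f (n + 1)
      ≤ (Q - P) * f 0 + Q * f 1 := by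
    intro n
    induction n with
    | zero => simp
    | succ n ih =>
      rw [Finset.sum_range_succ]
      linarith [hrec n]
  rw [← tsum_mul_left]
  refine Real.tsum_le_of_sum_range_le (fun i => mul_nonneg (by linarith) (hf i)) fun n => ?_
  rw [← Finset.mul_sum]
  linarith [hpartial n, mul_nonneg (by linarith : 0 ≤ Q - P) (hf n),
    mul_nonneg (by linarith : 0 ≤ Q) (hf (n + 1))]

theorem mul_tsum_abs_le_of_recurrence {p q : ℝ} (hpq : |p| + 1 ≤ |q|) {g : ℕ → ℝ}
    (hg : ∀ i, 1 ≤ i → q * g (i + 2) + p * g (i + 1) + g i = 0) :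
    (|q| - |p| - 1) * ∑' i, |g (i + 1)| ≤ (|q| - |p|) * |g 1| + |q| * |g 2| := by
  refine mul_tsum_le_of_two_step_bound (abs_nonneg p) hpq (fun i => abs_nonneg _) fun i => ?_
  calc |q| * |g (i + 3)| = |-(p * g (i + 2)) - g (i + 1)| := by
        rw [← abs_mul]; congr 1; linarith [hg (i + 1) (by omega)]
    _ ≤ |p| * |g (i + 2)| + |g (i + 1)| := by
        rw [← abs_mul, ← abs_neg (p * _)]; exact abs_sub _ _

theorem LinearIndependent.pair_recurrence {K V : Type*} [Field K] [AddCommGroup V] [Module K V]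
    {w u : V} (h : LinearIndependent K ![w, u]) {p q a₀ a₁ a₂ b₀ b₁ b₂ : K}
    (hrel : q • (a₂ • w + b₂ • u) + p • (a₁ • w + b₁ • u) + (a₀ • w + b₀ • u) = 0) :
    q * a₂ + p * a₁ + a₀ = 0 ∧ q * b₂ + p * b₁ + b₀ = 0 :=
  LinearIndependent.pair_iff.mp h _ _ (by rw [← hrel]; module)

theorem toR_sq_add_smul_add_smul_eq_zero {A : Matrix (Fin 2) (Fin 2) ℤ} {p q : ℤ}
    (hchar : A.charpoly = X ^ 2 + C p * X + C q) :
    toR A ^ 2 + (p : ℝ) • toR A + (q : ℝ) • 1 = 0 := by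
  have hcharR : (toR A).charpoly = X ^ 2 + C (p : ℝ) * X + C (q : ℝ) := by
    change (A.map (Int.castRingHom ℝ)).charpoly = _
    rw [charpoly_map, hchar]; simp
  have := aeval_self_charpoly (toR A)
  rw [hcharR] at this
  simpa only [map_add, map_mul, map_pow, aeval_X, aeval_C, Algebra.algebraMap_eq_smul_one,
    smul_mul_assoc, one_mul] using this

namespace Matrix

variable {n K : Type*} [Fintype n] [DecidableEq n] [Field K] {B : Matrix n n K} {p q : K}

theorem isUnit_det_of_sq_add_smul_add_smul_eq_zero (hB : B ^ 2 + p • B + q • 1 = 0)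
    (hq : q ≠ 0) : IsUnit B.det := by
  refine isUnit_det_of_right_inverse (B := -q⁻¹ • (B + p • 1)) ?_
  rw [Matrix.mul_smul, mul_add, Matrix.mul_smul, mul_one, ← sq,
    show B ^ 2 + p • B = -(q • 1) by linear_combination (norm := abel) hB]
  simp [smul_smul, hq]

theorem smul_inv_add_smul_one_add_eq_zero (hB : B ^ 2 + p • B + q • 1 = 0) (hq : q ≠ 0) :
    q • B⁻¹ + p • 1 + B = 0 := by
  have hBB := mul_nonsing_inv B (isUnit_det_of_sq_add_smul_add_smul_eq_zero hB hq)
  calc q • B⁻¹ + p • 1 + B = (B ^ 2 + p • B + q • 1) * B⁻¹ := by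
        rw [add_mul, add_mul, sq, mul_assoc, hBB, smul_mul_assoc, smul_mul_assoc, hBB, one_mul,
          mul_one]
        abel
    _ = 0 := by rw [hB, zero_mul]

theorem smul_inv_pow_add_smul_inv_pow_add_inv_pow (hB : B ^ 2 + p • B + q • 1 = 0) (hq : q ≠ 0)
    (i : ℕ) : q • B⁻¹ ^ (i + 2) + p • B⁻¹ ^ (i + 1) + B⁻¹ ^ i = 0 := by
  have hBB := nonsing_inv_mul B (isUnit_det_of_sq_add_smul_add_smul_eq_zero hB hq)
  calc q • B⁻¹ ^ (i + 2) + p • B⁻¹ ^ (i + 1) + B⁻¹ ^ i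
      = B⁻¹ ^ (i + 1) * (q • B⁻¹ + p • 1 + B) := by
        rw [mul_add, mul_add, Matrix.mul_smul, Matrix.mul_smul, mul_one, ← pow_succ, pow_succ _ i,
          mul_assoc _ B⁻¹ B, hBB, mul_one]
    _ = 0 := by rw [smul_inv_add_smul_one_add_eq_zero hB hq, mul_zero]

variable {w : n → K} {α β : ℕ → K}

theorem inv_pow_coeffs_recurrence (hB : B ^ 2 + p • B + q • 1 = 0) (hq : q ≠ 0)
    (hw : LinearIndependent K ![w, B *ᵥ w])
    (hαβ : ∀ i, 1 ≤ i → B⁻¹ ^ i *ᵥ w = α i • w + β i • B *ᵥ w) (i : ℕ) (hi : 1 ≤ i) :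
    q * α (i + 2) + p * α (i + 1) + α i = 0 ∧ q * β (i + 2) + p * β (i + 1) + β i = 0 := by
  refine hw.pair_recurrence ?_
  rw [← hαβ i hi, ← hαβ (i + 1) (by omega), ← hαβ (i + 2) (by omega), ← smul_mulVec,
    ← smul_mulVec, ← add_mulVec, ← add_mulVec, smul_inv_pow_add_smul_inv_pow_add_inv_pow hB hq,
    zero_mulVec]

theorem inv_pow_coeffs_one_two (hB : B ^ 2 + p • B + q • 1 = 0) (hq : q ≠ 0)
    (hw : LinearIndependent K ![w, B *ᵥ w])
    (hαβ : ∀ i, 1 ≤ i → B⁻¹ ^ i *ᵥ w = α i • w + β i • B *ᵥ w) :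
    α 1 = -p / q ∧ β 1 = -1 / q ∧ α 2 = (p ^ 2 - q) / q ^ 2 ∧ β 2 = p / q ^ 2 := by
  -- the relation `q B⁻¹ + p + B = 0` plays the role of the recurrence at `i = -1`
  obtain ⟨hα1, hβ1⟩ := hw.pair_recurrence (p := p) (q := q) (a₁ := 1) (b₁ := 0) (a₀ := 0)
    (b₀ := 1) (a₂ := α 1) (b₂ := β 1) (by
      simpa [← hαβ 1 le_rfl, add_mulVec, smul_mulVec] using
        congrArg (· *ᵥ w) (smul_inv_add_smul_one_add_eq_zero hB hq))
  obtain ⟨hα2, hβ2⟩ := hw.pair_recurrence (p := p) (q := q) (a₁ := α 1) (b₁ := β 1) (a₀ := 1)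
    (b₀ := 0) (a₂ := α 2) (b₂ := β 2) (by
      simpa [← hαβ 1 le_rfl, ← hαβ 2 (by norm_num), add_mulVec, smul_mulVec] using
        congrArg (· *ᵥ w) (smul_inv_pow_add_smul_inv_pow_add_inv_pow hB hq 0))
  refine ⟨?_, ?_, ?_, ?_⟩ <;> field_simp
  · linear_combination hα1
  · linear_combination hβ1
  · linear_combination q * hα2 - p * hα1
  · linear_combination q * hβ2 - p * hβ1

end Matrix

theorem le_div_of_sub_sub_one_mul_le {p q S : ℝ} (hq : 0 < q) (hd : 0 < q - p - 1)
    (h : (q - p - 1) * S ≤ (q - p) * p / q + |p ^ 2 - q| / q) :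
    (q ≤ p ^ 2 → S ≤ (p - 1) / (q - p - 1)) ∧
      (p ^ 2 < q → S ≤ (q * p - 2 * p ^ 2 + q) / (q * (q - p - 1))) := by
  constructor
  · intro hle
    rw [abs_of_nonneg (sub_nonneg.mpr hle)] at h
    rw [le_div_iff₀ hd, mul_comm]
    exact h.trans_eq (by field_simp; ring)
  · intro hlt
    rw [abs_of_neg (sub_neg.mpr hlt)] at h
    rw [le_div_iff₀ (mul_pos hq hd), mul_comm, mul_assoc]
    exact (mul_le_mul_of_nonneg_left h hq.le).trans_eq (by field_simp; ring)

theorem stmt8_general (A : Matrix (Fin 2) (Fin 2) ℤ) (p q : ℤ)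
    (hchar : A.charpoly = X ^ 2 + C p * X + C q)
    (hpq : 0 < |q| - |p| - 1)
    (v : Fin 2 → ℤ)
    (hv : LinearIndependent ℝ ![vecR v, (toR A).mulVec (vecR v)])
    (α β : ℕ → ℝ)
    (hαβ : ∀ i : ℕ, 1 ≤ i →
      ((toR A)⁻¹ ^ i).mulVec (vecR v) = α i • vecR v + β i • (toR A).mulVec (vecR v)) :
    ((|q| : ℝ) - (|p| : ℝ) - 1) * (∑' i : ℕ, |β (i + 1)|) ≤ 1 ∧
    ((|q| : ℝ) - (|p| : ℝ) - 1) * (∑' i : ℕ, |α (i + 1)|) ≤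
      ((|q| : ℝ) - (|p| : ℝ)) * (|p| : ℝ) / (|q| : ℝ) +
        (|p ^ 2 - q| : ℝ) / (|q| : ℝ) ∧
    (0 < q → 1 ≤ p → q ≤ p ^ 2 →
      (∑' i : ℕ, |α (i + 1)|) ≤ ((p : ℝ) - 1) / ((q : ℝ) - (p : ℝ) - 1)) ∧
    (0 < q → 1 ≤ p → p ^ 2 < q →
      (∑' i : ℕ, |α (i + 1)|) ≤
        ((q : ℝ) * (p : ℝ) - 2 * (p : ℝ) ^ 2 + (q : ℝ)) /
          ((q : ℝ) * ((q : ℝ) - (p : ℝ) - 1))) := by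
  have hB := toR_sq_add_smul_add_smul_eq_zero hchar
  have hpq' : |(p : ℝ)| + 1 < |(q : ℝ)| := by exact_mod_cast (by omega : |p| + 1 < |q|)
  have hq : (q : ℝ) ≠ 0 := abs_pos.mp (by linarith [abs_nonneg (p : ℝ)])
  obtain ⟨hα1, hβ1, hα2, hβ2⟩ := Matrix.inv_pow_coeffs_one_two hB hq hv hαβ
  have hrec := Matrix.inv_pow_coeffs_recurrence hB hq hv hαβ
  have hα := mul_tsum_abs_le_of_recurrence hpq'.le fun i hi => (hrec i hi).1
  have hβ := mul_tsum_abs_le_of_recurrence hpq'.le fun i hi => (hrec i hi).2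
  rw [hα1, hα2, abs_div, abs_div, abs_neg, abs_pow] at hα
  rw [hβ1, hβ2, abs_div, abs_div, abs_neg, abs_pow, abs_one] at hβ
  have hαbound : (|(q : ℝ)| - |(p : ℝ)| - 1) * (∑' i, |α (i + 1)|) ≤
      (|(q : ℝ)| - |(p : ℝ)|) * |(p : ℝ)| / |(q : ℝ)| + |(p : ℝ) ^ 2 - q| / |(q : ℝ)| :=
    hα.trans_eq (by field_simp)
  refine ⟨hβ.trans_eq (by field_simp; ring), hαbound, fun hq0 hp hle => ?_, fun hq0 hp hlt => ?_⟩
  all_goals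
    have hq0 : (0 : ℝ) < q := by exact_mod_cast hq0
    have hp : (0 : ℝ) ≤ p := by exact_mod_cast (by omega : 0 ≤ p)
    rw [abs_of_pos hq0, abs_of_nonneg hp] at hαbound hpq'
  · exact (le_div_of_sub_sub_one_mul_le hq0 (by linarith) hαbound).1 (by exact_mod_cast hle)
  · exact (le_div_of_sub_sub_one_mul_le hq0 (by linarith) hαbound).2 (by exact_mod_cast hlt)

/-- general bounds `(|q|-|p|-1)β̃ ≤ 1` and
`(|q|-|p|-1)α̃ ≤ (|q|-|p|)|p|/|q| + |p²-q|/|q|`, together with the particular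
bounds for `q > 0`, `p ≥ 1`. -/
theorem stmt8 (A : Matrix (Fin 2) (Fin 2) ℤ) (p q : ℤ)
    (hA : IsExpanding A)
    (hchar : A.charpoly = X ^ 2 + C p * X + C q)
    (hpq : 0 < |q| - |p| - 1)
    (v : Fin 2 → ℤ)
    (hv : LinearIndependent ℝ ![vecR v, (toR A).mulVec (vecR v)])
    (α β : ℕ → ℝ)
    (hαβ : ∀ i : ℕ, 1 ≤ i →
      ((toR A)⁻¹ ^ i).mulVec (vecR v) = α i • vecR v + β i • (toR A).mulVec (vecR v)) :
    ((|q| : ℝ) - (|p| : ℝ) - 1) * (∑' i : ℕ, |β (i + 1)|) ≤ 1 ∧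
    ((|q| : ℝ) - (|p| : ℝ) - 1) * (∑' i : ℕ, |α (i + 1)|) ≤
      ((|q| : ℝ) - (|p| : ℝ)) * (|p| : ℝ) / (|q| : ℝ) +
        (|p ^ 2 - q| : ℝ) / (|q| : ℝ) ∧
    (0 < q → 1 ≤ p → q ≤ p ^ 2 →
      (∑' i : ℕ, |α (i + 1)|) ≤ ((p : ℝ) - 1) / ((q : ℝ) - (p : ℝ) - 1)) ∧
    (0 < q → 1 ≤ p → p ^ 2 < q →
      (∑' i : ℕ, |α (i + 1)|) ≤
        ((q : ℝ) * (p : ℝ) - 2 * (p : ℝ) ^ 2 + (q : ℝ)) /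
          ((q : ℝ) * ((q : ℝ) - (p : ℝ) - 1))) :=
  stmt8_general A p q hchar hpq v hv α β hαβ
end
end

section
/- Let A be a 2×2 expanding integer matrix, let v ∈ ℤ² be such that {v, Av} is linearly independent over ℝ, let D ⊂ ℤ be a finite digit set, and set T₁ = T(A, Dv) and T₂ = T(−A, Dv). Then for every l ∈ ℝ², l ∈ T₁ − T₁ if and only if l ∈ T₂ − T₂; consequently T₁ is connected if and only if T₂ is connected. -/
open Matrix Polynomial Pointwise

noncomputable section

/-!
Write `T = T(A, D v)`, so that `T - T` consists of the sums `∑ᵢ (dᵢ - d'ᵢ) A⁻⁽ⁱ⁺¹⁾ v` with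
digits `dᵢ, d'ᵢ ∈ D`. Replacing `A` by `-A` flips the sign of every other term, and exchanging
`dᵢ` with `d'ᵢ` in those terms flips it back; hence `T(A, D v)` and `T(-A, D v)` have the same
difference set.

Connectedness follows from Hata's criterion. `T` is the union of the pieces `A⁻¹ (T + d v)`,
`d ∈ D`, and two pieces meet iff `(d' - d) v ∈ T - T`. If the resulting graph on `D` is
connected, then by self-affinity so are the graphs of the pieces of every level `n`, whose
diameters tend to `0`; so `T` is `ε`-chain connected for every `ε > 0`, hence connected as it is
compact. Conversely, a partition of `D` with no edge across splits `T` into two disjoint closed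
sets. The graph only depends on `T - T`, so it is the same for `A` and `-A`.

The series converge because the spectral radius of `A⁻¹` is `< 1`, so that `‖A⁻ⁿ‖` is summable
by Gelfand's formula.
-/

open Filter Topology Set Relation

theorem summable_norm_pow_of_spectralRadius_lt_one {A : Type*} [NormedRing A]
    [NormedAlgebra ℂ A] [CompleteSpace A] (a : A) (ha : spectralRadius ℂ a < 1) :
    Summable fun n : ℕ => ‖a ^ n‖ := by
  obtain ⟨r, hr0, hρr, hr1⟩ := ENNReal.lt_iff_exists_real_btwn.mp ha
  rw [ENNReal.ofReal_lt_one] at hr1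
  have hle : ∀ᶠ n in atTop, ‖‖a ^ n‖‖ ≤ r ^ n := by
    filter_upwards [(spectrum.pow_norm_pow_one_div_tendsto_nhds_spectralRadius a).eventually
      (gt_mem_nhds hρr), eventually_ne_atTop 0] with n hn hn0
    rw [norm_norm, ← Real.rpow_inv_natCast_pow (norm_nonneg (a ^ n)) hn0, ← one_div]
    exact pow_le_pow_left₀ (by positivity)
      ((ENNReal.ofReal_lt_ofReal_iff_of_nonneg (by positivity)).mp hn).le n
  exact .of_norm_bounded_eventually_nat (summable_geometric_of_lt_one hr0 hr1) hle

namespace Matrix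

variable {ι : Type*} [Fintype ι] [DecidableEq ι]

theorem map_nonsing_inv {K L : Type*} [Field K] [Field L] (f : K →+* L) (M : Matrix ι ι K) :
    M⁻¹.map f = (M.map f)⁻¹ := by
  have hadj := RingHom.map_adjugate f M
  have hdet := RingHom.map_det f M
  simp only [RingHom.mapMatrix_apply] at hadj hdet
  rw [inv_def, inv_def, map_smul' _ _ _ (map_mul f), hadj, ← hdet, Ring.inverse_eq_inv',
    Ring.inverse_eq_inv', map_inv₀]

theorem norm_lt_one_of_mem_spectrum_inv (C : Matrix ι ι ℂ)
    (hC : ∀ z ∈ spectrum ℂ C, 1 < ‖z‖) {z : ℂ} (hz : z ∈ spectrum ℂ C⁻¹) : ‖z‖ < 1 := by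
  have hunit : IsUnit C := (spectrum.zero_notMem_iff ℂ).mp fun h => absurd (hC 0 h) (by norm_num)
  lift C to (Matrix ι ι ℂ)ˣ using hunit
  rw [← coe_units_inv, ← spectrum.map_inv] at hz
  simpa using inv_lt_one_of_one_lt₀ (hC _ hz)

open scoped Matrix.Norms.Operator

theorem summable_norm_pow_mulVec [Nonempty ι] (M : Matrix ι ι ℝ)
    (hM : ∀ z ∈ spectrum ℂ (M.map ((↑) : ℝ → ℂ)), ‖z‖ < 1) (w : ι → ℝ) :
    Summable fun k : ℕ => ‖(M ^ k) *ᵥ w‖ := by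
  have hρ : spectralRadius ℂ (M.map ((↑) : ℝ → ℂ)) < 1 := by
    simpa using spectrum.spectralRadius_lt_of_forall_lt _ (r := 1) fun z hz => by
      rw [← NNReal.coe_lt_coe]; simpa using hM z hz
  have hnorm (k : ℕ) : ‖M ^ k‖ = ‖(M.map ((↑) : ℝ → ℂ)) ^ k‖ := by
    have hpow : (M ^ k).map ((↑) : ℝ → ℂ) = (M.map (↑)) ^ k :=
      map_pow Complex.ofRealHom.mapMatrix M k
    rw [← hpow, linfty_opNorm_def, linfty_opNorm_def]
    simp
  refine .of_nonneg_of_le (fun _ => norm_nonneg _)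
    (fun k => (linfty_opNorm_mulVec _ _).trans_eq (by rw [hnorm]))
    ((summable_norm_pow_of_spectralRadius_lt_one _ hρ).mul_right ‖w‖)

end Matrix

section SeqCons

variable {α : Type*}

def seqCons (a : α) (s : ℕ → α) : ℕ → α
  | 0 => a
  | n + 1 => s n

@[simp] theorem seqCons_zero (a : α) (s : ℕ → α) : seqCons a s 0 = a := rfl

@[simp] theorem seqCons_succ (a : α) (s : ℕ → α) (n : ℕ) : seqCons a s (n + 1) = s n := rfl

theorem seqCons_head_tail (s : ℕ → α) : seqCons (s 0) (fun n => s (n + 1)) = s := by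
  funext n; cases n <;> rfl

theorem continuous_seqCons [TopologicalSpace α] (a : α) : Continuous (seqCons a) :=
  continuous_pi fun n => by
    cases n with
    | zero => exact continuous_const
    | succ n => exact continuous_apply n

end SeqCons

section DigitSum

variable {E : Type*} [NormedAddCommGroup E]

theorem Summable.of_forall_eq_or_eq_neg {u u' : ℕ → E} (hu : Summable (‖u ·‖))
    (h : ∀ i, u' i = u i ∨ u' i = -u i) : Summable (‖u' ·‖) :=
  hu.congr fun i => by rcases h i with h | h <;> simp [h]

variable [NormedSpace ℝ E] {D : Set ℤ}

def digitSum (u : ℕ → E) (c : ℕ → D) : E := ∑' i, ((c i : ℤ) : ℝ) • u i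

variable (D) in
def digitSet (u : ℕ → E) : Set E := range (digitSum u : (ℕ → D) → E)

theorem digitSet_eq_iUnion (u : ℕ → E) :
    digitSet D u = ⋃ d : D, range (digitSum u ∘ seqCons d) := by
  refine Subset.antisymm ?_ (iUnion_subset fun d => range_comp_subset_range _ _)
  rintro _ ⟨c, rfl⟩
  exact mem_iUnion.mpr ⟨c 0, _, by rw [Function.comp_apply, seqCons_head_tail]⟩

variable [CompleteSpace E] [Finite D] {u : ℕ → E}

theorem summable_digit_smul (hu : Summable (‖u ·‖)) (c : ℕ → D) :
    Summable fun i => ((c i : ℤ) : ℝ) • u i := by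
  obtain ⟨K, hK⟩ := Finite.exists_le fun d : D => ‖((d : ℤ) : ℝ)‖
  refine .of_norm_bounded (hu.mul_left K) fun i => ?_
  rw [norm_smul]
  exact mul_le_mul_of_nonneg_right (hK _) (norm_nonneg _)

theorem exists_dist_digitSum_lt (hu : Summable (‖u ·‖)) {ε : ℝ} (hε : 0 < ε) :
    ∃ n, ∀ a : ℕ → D, ∀ b ∈ PiNat.cylinder a n, dist (digitSum u a) (digitSum u b) < ε := by
  obtain ⟨K, hK⟩ := Finite.exists_le fun d : D => ‖((d : ℤ) : ℝ)‖
  have htail : Tendsto (fun n => ∑' i, 2 * K * ‖u (i + n)‖) atTop (𝓝 0) :=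
    tendsto_sum_nat_add fun i => 2 * K * ‖u i‖
  obtain ⟨n, hn⟩ := (htail.eventually (gt_mem_nhds hε)).exists
  refine ⟨n, fun a b hab => ?_⟩
  set g : ℕ → E := fun i => ((a i : ℤ) : ℝ) • u i - ((b i : ℤ) : ℝ) • u i
  have hg : HasSum g (digitSum u a - digitSum u b) :=
    (summable_digit_smul hu a).hasSum.sub (summable_digit_smul hu b).hasSum
  have hg_tail : HasSum (fun i => g (i + n)) (digitSum u a - digitSum u b) := by
    have hhead : ∑ i ∈ Finset.range n, g i = 0 :=
      Finset.sum_eq_zero fun i hi => by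
        simp [g, PiNat.mem_cylinder_iff.mp hab i (Finset.mem_range.mp hi)]
    simpa [hhead] using (hasSum_nat_add_iff' n).mpr hg
  have hbound (i : ℕ) : ‖g (i + n)‖ ≤ 2 * K * ‖u (i + n)‖ := by
    refine (norm_sub_le _ _).trans ?_
    rw [norm_smul, norm_smul]
    nlinarith [hK (a (i + n)), hK (b (i + n)), norm_nonneg (u (i + n))]
  rw [dist_eq_norm, ← hg_tail.tsum_eq]
  exact (tsum_of_norm_bounded ((summable_nat_add_iff n).mpr (hu.mul_left (2 * K))).hasSum
    hbound).trans_lt hn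

theorem continuous_digitSum (hu : Summable (‖u ·‖)) : Continuous (digitSum u (D := D)) := by
  obtain ⟨K, hK⟩ := Finite.exists_le fun d : D => ‖((d : ℤ) : ℝ)‖
  refine continuous_tsum (fun i => ?_) (hu.mul_left K) fun i c => ?_
  · exact ((continuous_of_discreteTopology (f := fun d : D => ((d : ℤ) : ℝ))).comp
      (continuous_apply i)).smul continuous_const
  · rw [norm_smul]
    exact mul_le_mul_of_nonneg_right (hK _) (norm_nonneg _)

/-- Exchanging the digits of `a` and `b` at the positions where `u'` and `u` differ in sign
turns `digitSum u' a - digitSum u' b` into a difference of two `u`-expansions. -/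
theorem digitSet_sub_subset_of_forall_eq_or_eq_neg {u' : ℕ → E} (hu : Summable (‖u ·‖))
    (h : ∀ i, u' i = u i ∨ u' i = -u i) :
    digitSet D u' - digitSet D u' ⊆ digitSet D u - digitSet D u := by
  classical
  have hu' := hu.of_forall_eq_or_eq_neg h
  rintro _ ⟨_, ⟨a, rfl⟩, _, ⟨b, rfl⟩, rfl⟩
  set a' : ℕ → D := fun i => if u' i = u i then a i else b i
  set b' : ℕ → D := fun i => if u' i = u i then b i else a i
  have hterm (i : ℕ) : ((a' i : ℤ) : ℝ) • u i - ((b' i : ℤ) : ℝ) • u i =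
      ((a i : ℤ) : ℝ) • u' i - ((b i : ℤ) : ℝ) • u' i := by
    by_cases hi : u' i = u i
    · simp [a', b', hi]
    · simp only [a', b', if_neg hi]
      rw [(h i).resolve_left hi, smul_neg, smul_neg]
      abel
  refine ⟨digitSum u a', ⟨a', rfl⟩, digitSum u b', ⟨b', rfl⟩, ?_⟩
  have h₁ := (summable_digit_smul hu a').hasSum.sub (summable_digit_smul hu b').hasSum
  simp only [hterm] at h₁
  exact h₁.unique ((summable_digit_smul hu' a).hasSum.sub (summable_digit_smul hu' b).hasSum)

end DigitSum

section Connectedness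

variable {X : Type*}

theorem IsCompact.isPreconnected_of_reflTransGen [MetricSpace X] {s : Set X} (hs : IsCompact s)
    (h : ∀ ε > 0, ∀ x ∈ s, ∀ y ∈ s, ReflTransGen (fun x y => y ∈ s ∧ dist x y < ε) x y) :
    IsPreconnected s := by
  rw [isPreconnected_closed_iff]
  rintro t t' ht ht' hcover ⟨x, hxs, hxt⟩ ⟨y, hys, hyt'⟩
  by_contra hst
  have hdisj : Disjoint (s ∩ t) (s ∩ t') :=
    Set.disjoint_left.mpr fun z hz hz' => hst ⟨z, hz.1, hz.2, hz'.2⟩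
  obtain ⟨δ, hδ, hthick⟩ := hdisj.exists_thickenings (hs.inter_right ht)
    (hs.inter_right ht').isClosed
  have hreach (z : X) (hz : ReflTransGen (fun x y => y ∈ s ∧ dist x y < δ) x z) : z ∈ s ∩ t := by
    induction hz with
    | refl => exact ⟨hxs, hxt⟩
    | tail _ hstep ih =>
      obtain ⟨hs', hdist⟩ := hstep
      refine ⟨hs', (hcover hs').resolve_right fun ht'' => Set.disjoint_left.mp hthick ?_
        (Metric.self_subset_thickening hδ _ ⟨hs', ht''⟩)⟩
      exact Metric.mem_thickening_iff.mpr ⟨_, ih, by rwa [dist_comm]⟩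
  exact hst ⟨y, hys, (hreach y (h δ hδ x hxs y hys)).2, hyt'⟩

theorem IsPreconnected.reflTransGen_of_iUnion [TopologicalSpace X] {ι : Type*} [Finite ι]
    {s : ι → Set X} (hs : IsPreconnected (⋃ i, s i)) (hclosed : ∀ i, IsClosed (s i))
    (hne : ∀ i, (s i).Nonempty) (i j : ι) :
    ReflTransGen (fun i j => (s i ∩ s j).Nonempty) i j := by
  by_contra hij
  set S := {k | ReflTransGen (fun i j => (s i ∩ s j).Nonempty) i k}
  have hclosed' (T : Set ι) : IsClosed (⋃ k ∈ T, s k) :=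
    (Set.toFinite T).isClosed_biUnion fun k _ => hclosed k
  obtain ⟨x, -, hxS, hxSc⟩ := isPreconnected_closed_iff.mp hs _ _ (hclosed' S) (hclosed' Sᶜ)
    (fun x hx => by
      obtain ⟨k, hk⟩ := mem_iUnion.mp hx
      by_cases hkS : k ∈ S
      · exact Or.inl (mem_biUnion hkS hk)
      · exact Or.inr (mem_biUnion hkS hk))
    (let ⟨y, hy⟩ := hne i; ⟨y, mem_iUnion_of_mem i hy, mem_biUnion ReflTransGen.refl hy⟩)
    (let ⟨y, hy⟩ := hne j; ⟨y, mem_iUnion_of_mem j hy, mem_biUnion hij hy⟩)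
  obtain ⟨k, hk, hxk⟩ := mem_iUnion₂.mp hxS
  obtain ⟨k', hk', hxk'⟩ := mem_iUnion₂.mp hxSc
  exact hk' (ReflTransGen.tail hk ⟨x, hxk, hxk'⟩)

end Connectedness

section SelfAffine

variable {ι : Type*} [Fintype ι] [DecidableEq ι]

def powSuccMulVec (M : Matrix ι ι ℝ) (w : ι → ℝ) (i : ℕ) : ι → ℝ := (M ^ (i + 1)) *ᵥ w

/-- Edges of Hata's graph on the digits: by `inter_range_seqCons_nonempty_iff`, `d` and `d'`
are adjacent iff the pieces `M (T + d w)` and `M (T + d' w)` of `T` intersect. -/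
def DigitAdj (D : Set ℤ) (M : Matrix ι ι ℝ) (w : ι → ℝ) (d d' : D) : Prop :=
  (((d' : ℤ) : ℝ) - d) • w ∈ digitSet D (powSuccMulVec M w) - digitSet D (powSuccMulVec M w)

theorem powSuccMulVec_neg (M : Matrix ι ι ℝ) (w : ι → ℝ) (i : ℕ) :
    powSuccMulVec (-M) w i = powSuccMulVec M w i ∨
      powSuccMulVec (-M) w i = -powSuccMulVec M w i := by
  rcases neg_one_pow_eq_or (Matrix ι ι ℝ) (i + 1) with h | h <;>
    simp [powSuccMulVec, neg_pow, h, Matrix.neg_mulVec]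

variable {D : Set ℤ} [Finite D] {M : Matrix ι ι ℝ} {w : ι → ℝ}

theorem digitSum_seqCons (hu : Summable (‖powSuccMulVec M w ·‖)) (d : D) (c : ℕ → D) :
    digitSum (powSuccMulVec M w) (seqCons d c) =
      M *ᵥ (((d : ℤ) : ℝ) • w + digitSum (powSuccMulVec M w) c) := by
  have hc : HasSum (fun i => ((seqCons d c (i + 1) : D) : ℝ) • powSuccMulVec M w (i + 1))
      (M *ᵥ digitSum (powSuccMulVec M w) c) := by
    simpa [powSuccMulVec, digitSum, Function.comp_def, Matrix.mulVec_smul, Matrix.mulVec_mulVec,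
      pow_succ'] using
      (summable_digit_smul hu c).hasSum.map M.mulVecLin
        (continuous_const.matrix_mulVec continuous_id)
  have h : HasSum (fun i => ((seqCons d c i : D) : ℝ) • powSuccMulVec M w i)
      (M *ᵥ (((d : ℤ) : ℝ) • w + digitSum (powSuccMulVec M w) c)) := by
    rw [← hasSum_nat_add_iff' 1]
    simpa [powSuccMulVec, Matrix.mulVec_add, Matrix.mulVec_smul] using hc
  exact h.tsum_eq

theorem digitSum_seqCons_eq_iff (hM : Function.Injective (M *ᵥ ·))
    (hu : Summable (‖powSuccMulVec M w ·‖)) (d d' : D) (a b : ℕ → D) :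
    digitSum (powSuccMulVec M w) (seqCons d a) = digitSum (powSuccMulVec M w) (seqCons d' b) ↔
      (((d' : ℤ) : ℝ) - d) • w =
        digitSum (powSuccMulVec M w) a - digitSum (powSuccMulVec M w) b := by
  rw [digitSum_seqCons hu, digitSum_seqCons hu, hM.eq_iff]
  constructor <;> intro h <;> linear_combination (norm := module) -h

theorem inter_range_seqCons_nonempty_iff (hM : Function.Injective (M *ᵥ ·))
    (hu : Summable (‖powSuccMulVec M w ·‖)) (d d' : D) :
    (range (digitSum (powSuccMulVec M w) ∘ seqCons d) ∩
      range (digitSum (powSuccMulVec M w) ∘ seqCons d')).Nonempty ↔ DigitAdj D M w d d' := by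
  constructor
  · rintro ⟨_, ⟨a, rfl⟩, b, hb⟩
    exact ⟨_, ⟨a, rfl⟩, _, ⟨b, rfl⟩, ((digitSum_seqCons_eq_iff hM hu d d' a b).mp hb.symm).symm⟩
  · rintro ⟨_, ⟨a, rfl⟩, _, ⟨b, rfl⟩, h⟩
    exact ⟨_, ⟨a, rfl⟩, b, ((digitSum_seqCons_eq_iff hM hu d d' a b).mpr h.symm).symm⟩

theorem reflTransGen_mem_cylinder_or_digitSum_eq (hM : Function.Injective (M *ᵥ ·))
    (hu : Summable (‖powSuccMulVec M w ·‖))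
    (hG : ∀ d d' : D, ReflTransGen (DigitAdj D M w) d d')
    (n : ℕ) (a b : ℕ → D) :
    ReflTransGen (fun a b => b ∈ PiNat.cylinder a n ∨
      digitSum (powSuccMulVec M w) a = digitSum (powSuccMulVec M w) b) a b := by
  induction n generalizing a b with
  | zero => exact .single (Or.inl (by simp [PiNat.cylinder_zero]))
  | succ n ih =>
    have hcons (d : D) (a b : ℕ → D) : ReflTransGen (fun a b => b ∈ PiNat.cylinder a (n + 1) ∨
        digitSum (powSuccMulVec M w) a = digitSum (powSuccMulVec M w) b)
        (seqCons d a) (seqCons d b) := ReflTransGen.lift (seqCons d) (fun a b h => h.imp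
      (fun h => PiNat.mem_cylinder_iff.mpr fun i hi => by
        cases i with
        | zero => rfl
        | succ i => exact PiNat.mem_cylinder_iff.mp h i (by omega))
      (fun h => by rw [digitSum_seqCons hu, digitSum_seqCons hu, h])) a b (ih a b)
    -- follow a path from `a 0` in the graph; an edge `e ~ e'` provides sequences starting with
    -- `e` and `e'` that have the same sum
    have hreach (e : D) (he : ReflTransGen (DigitAdj D M w) (a 0) e) (t : ℕ → D) :
        ReflTransGen (fun a b => b ∈ PiNat.cylinder a (n + 1) ∨
          digitSum (powSuccMulVec M w) a = digitSum (powSuccMulVec M w) b) a (seqCons e t) := by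
      induction he generalizing t with
      | refl => simpa only [seqCons_head_tail] using hcons (a 0) (fun n => a (n + 1)) t
      | tail _ hadj ih' =>
        obtain ⟨_, ⟨s, rfl⟩, s', hs'⟩ := (inter_range_seqCons_nonempty_iff hM hu _ _).mpr hadj
        exact ((ih' s).tail (Or.inr hs'.symm)).trans (hcons _ _ _)
    simpa only [seqCons_head_tail] using hreach (b 0) (hG _ _) (fun n => b (n + 1))

theorem isPreconnected_digitSet_iff (hM : Function.Injective (M *ᵥ ·))
    (hu : Summable (‖powSuccMulVec M w ·‖)) :
    IsPreconnected (digitSet D (powSuccMulVec M w)) ↔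
      ∀ d d' : D, ReflTransGen (DigitAdj D M w) d d' := by
  constructor
  · intro h d d'
    have : Nonempty D := ⟨d⟩
    rw [digitSet_eq_iUnion] at h
    refine ReflTransGen.mono (fun e e' => (inter_range_seqCons_nonempty_iff hM hu e e').mp) _ _
      (h.reflTransGen_of_iUnion (fun e => ?_) (fun e => range_nonempty _) d d')
    exact (isCompact_range ((continuous_digitSum hu).comp (continuous_seqCons e))).isClosed
  · intro hG
    refine (isCompact_range (continuous_digitSum hu)).isPreconnected_of_reflTransGen ?_
    rintro ε hε _ ⟨a, rfl⟩ _ ⟨b, rfl⟩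
    obtain ⟨n, hn⟩ := exists_dist_digitSum_lt (D := D) hu hε
    exact ReflTransGen.lift _ (fun a b h => ⟨mem_range_self b,
      h.elim (hn a b) fun h => by rwa [h, dist_self]⟩) a b
      (reflTransGen_mem_cylinder_or_digitSum_eq hM hu hG n a b)

theorem isConnected_digitSet_iff (hM : Function.Injective (M *ᵥ ·))
    (hu : Summable (‖powSuccMulVec M w ·‖)) :
    IsConnected (digitSet D (powSuccMulVec M w)) ↔
      Nonempty D ∧ ∀ d d' : D, ReflTransGen (DigitAdj D M w) d d' := by
  rw [IsConnected, isPreconnected_digitSet_iff hM hu, digitSet, range_nonempty_iff_nonempty]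
  exact Iff.and ⟨fun ⟨c⟩ => ⟨c 0⟩, fun ⟨d⟩ => ⟨fun _ => d⟩⟩ Iff.rfl

theorem digitSet_sub_digitSet_neg (hu : Summable (‖powSuccMulVec M w ·‖)) :
    digitSet D (powSuccMulVec M w) - digitSet D (powSuccMulVec M w) =
      digitSet D (powSuccMulVec (-M) w) - digitSet D (powSuccMulVec (-M) w) :=
  Subset.antisymm
    (digitSet_sub_subset_of_forall_eq_or_eq_neg (hu.of_forall_eq_or_eq_neg (powSuccMulVec_neg M w))
      fun i => by simpa only [neg_neg] using powSuccMulVec_neg (-M) w i)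
    (digitSet_sub_subset_of_forall_eq_or_eq_neg hu (powSuccMulVec_neg M w))

theorem digitAdj_neg (hu : Summable (‖powSuccMulVec M w ·‖)) :
    DigitAdj D (-M) w = DigitAdj D M w := by
  unfold DigitAdj
  rw [digitSet_sub_digitSet_neg hu]

end SelfAffine

section Expanding

theorem toR_map_ofReal (A : Matrix (Fin 2) (Fin 2) ℤ) :
    (toR A).map ((↑) : ℝ → ℂ) = A.map (↑) := by
  ext i j; simp [toR]

variable {A : Matrix (Fin 2) (Fin 2) ℤ}

theorem IsExpanding.isUnit_toR (hA : IsExpanding A) : IsUnit (toR A) := by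
  have h : IsUnit (A.map ((↑) : ℤ → ℂ)) :=
    (spectrum.zero_notMem_iff ℂ).mp fun h => absurd (hA 0 h) (by norm_num)
  have hdet : ((toR A).map ((↑) : ℝ → ℂ)).det = ((toR A).det : ℂ) :=
    (RingHom.map_det Complex.ofRealHom _).symm
  rw [← toR_map_ofReal, Matrix.isUnit_iff_isUnit_det, hdet, isUnit_iff_ne_zero,
    Complex.ofReal_ne_zero] at h
  exact (Matrix.isUnit_iff_isUnit_det _).mpr (isUnit_iff_ne_zero.mpr h)

theorem IsExpanding.norm_lt_one_of_mem_spectrum (hA : IsExpanding A) :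
    ∀ z ∈ spectrum ℂ (((toR A)⁻¹).map ((↑) : ℝ → ℂ)), ‖z‖ < 1 := by
  rw [show ((↑) : ℝ → ℂ) = Complex.ofRealHom from rfl, Matrix.map_nonsing_inv,
    ← show ((↑) : ℝ → ℂ) = Complex.ofRealHom from rfl, toR_map_ofReal]
  exact fun z => Matrix.norm_lt_one_of_mem_spectrum_inv _ hA

theorem IsExpanding.inv_toR_neg (hA : IsExpanding A) : (toR (-A))⁻¹ = -(toR A)⁻¹ := by
  refine Matrix.inv_eq_left_inv ?_
  rw [show toR (-A) = -toR A by ext i j; simp [toR], neg_mul_neg,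
    Matrix.nonsing_inv_mul _ ((Matrix.isUnit_iff_isUnit_det _).mp hA.isUnit_toR)]

theorem IsExpanding.summable_norm_powSuccMulVec (hA : IsExpanding A) (w : Fin 2 → ℝ) :
    Summable (‖powSuccMulVec (toR A)⁻¹ w ·‖) :=
  (summable_nat_add_iff 1).mpr (Matrix.summable_norm_pow_mulVec _ hA.norm_lt_one_of_mem_spectrum w)

theorem attractor_eq_digitSet {D : Set ℤ} [Finite D] (v : Fin 2 → ℤ)
    (hu : Summable (‖powSuccMulVec (toR A)⁻¹ (vecR v) ·‖)) :
    attractor A D v = digitSet D (powSuccMulVec (toR A)⁻¹ (vecR v)) := by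
  ext x
  constructor
  · rintro ⟨d, hd, hx⟩
    exact ⟨fun i => ⟨d i, hd i⟩, hx.tsum_eq⟩
  · rintro ⟨c, rfl⟩
    exact ⟨fun i => c i, fun i => (c i).2, (summable_digit_smul hu c).hasSum⟩

end Expanding

theorem stmt11_general (A : Matrix (Fin 2) (Fin 2) ℤ)
    (hA : IsExpanding A)
    (v : Fin 2 → ℤ)
    (D : Set ℤ) (hD : D.Finite) :
    (∀ l : Fin 2 → ℝ,
      l ∈ attractor A D v - attractor A D v ↔
        l ∈ attractor (-A) D v - attractor (-A) D v) ∧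
    (IsConnected (attractor A D v) ↔ IsConnected (attractor (-A) D v)) := by
  have : Finite D := hD
  set M := (toR A)⁻¹
  have hM : IsUnit M := (Matrix.isUnit_nonsing_inv_iff).mpr hA.isUnit_toR
  have hu : Summable (‖powSuccMulVec M (vecR v) ·‖) := hA.summable_norm_powSuccMulVec (vecR v)
  have hu' := hu.of_forall_eq_or_eq_neg (powSuccMulVec_neg M (vecR v))
  have hT : attractor A D v = digitSet D (powSuccMulVec M (vecR v)) := attractor_eq_digitSet v hu
  have hT' : attractor (-A) D v = digitSet D (powSuccMulVec (-M) (vecR v)) := by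
    rw [attractor_eq_digitSet v (by rwa [hA.inv_toR_neg]), hA.inv_toR_neg]
  refine ⟨fun l => by rw [hT, hT', digitSet_sub_digitSet_neg hu], ?_⟩
  rw [hT, hT', isConnected_digitSet_iff (Matrix.mulVec_injective_iff_isUnit.mpr hM) hu,
    isConnected_digitSet_iff (Matrix.mulVec_injective_iff_isUnit.mpr hM.neg) hu', digitAdj_neg hu]

/-- `T(A, Dv)` and `T(-A, Dv)` have the same difference set; consequently
one is connected iff the other is. -/
theorem stmt11 (A : Matrix (Fin 2) (Fin 2) ℤ)
    (hA : IsExpanding A)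
    (v : Fin 2 → ℤ)
    (hv : LinearIndependent ℝ ![vecR v, (toR A).mulVec (vecR v)])
    (D : Set ℤ) (hD : D.Finite) :
    (∀ l : Fin 2 → ℝ,
      l ∈ attractor A D v - attractor A D v ↔
        l ∈ attractor (-A) D v - attractor (-A) D v) ∧
    (IsConnected (attractor A D v) ↔ IsConnected (attractor (-A) D v)) :=
  stmt11_general A hA v D hD
end
end

section
/- Let A be a 2×2 expanding integer matrix with characteristic polynomial f(x) = x² + q (i.e. p = 0) where |q| ≥ 3, let m ≥ −1 be an integer, and let 𝒟 = {0, 1, …, |q| − 2, |q| + m}v where v ∈ ℤ² is such that {v, Av} is linearly independent over ℝ. Then the self-affine fractal T = T(A, 𝒟) is connected if and only if m = −1, i.e. if and only if 𝒟 = {0, 1, …, |q| − 1}v. -/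
open Matrix Polynomial Pointwise

noncomputable section

/-!
By Cayley–Hamilton `A² = -q`, so `A⁻²ᵏ = rᵏ` with `r = -1/q`, and the even- and odd-indexed
digits of `∑ A⁻⁽ⁱ⁺¹⁾ (dᵢ v)` decouple: `T` is the image of `F × F` under the linear isomorphism
`(s, t) ↦ s A⁻¹v + t A⁻²v`, where `F = {∑ eₖ rᵏ : eₖ ∈ D}` is a self-similar subset of `ℝ`.
Hence `T` is connected iff `F` is.

For `D = {0, …, |q| - 1}` the pieces `d + r I` tile an interval `I`, which is therefore `F`.
For `m ≥ 0`, `F` lies in an interval `I` with `|r| · |I| = (|q| + m) / (|q| - 1) < m + 2`, so the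
pieces `d + r F` with `d ≤ |q| - 2` and the piece `|q| + m + r F` are separated by a gap.
-/

open Set

def expansionSet (D : Set ℤ) (r : ℝ) : Set ℝ :=
  {x | ∃ e : ℕ → ℤ, (∀ k, e k ∈ D) ∧ HasSum (fun k => (e k : ℝ) * r ^ k) x}

section Expansion

variable {D : Set ℤ} {r : ℝ}

theorem summable_intCast_mul_pow {e : ℕ → ℤ} {C : ℝ} (hr : |r| < 1)
    (he : ∀ k, |(e k : ℝ)| ≤ C) : Summable fun k => (e k : ℝ) * r ^ k :=
  .of_norm_bounded ((summable_geometric_of_lt_one (abs_nonneg r) hr).mul_left C) fun k => by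
    rw [norm_mul, norm_pow, Real.norm_eq_abs, Real.norm_eq_abs]
    exact mul_le_mul_of_nonneg_right (he k) (by positivity)

theorem intCast_mem_expansionSet {d : ℤ} (hd : d ∈ D) (h0 : 0 ∈ D) :
    (d : ℝ) ∈ expansionSet D r := by
  classical
  refine ⟨fun k => if k = 0 then d else 0, fun k => by dsimp only; split_ifs <;> assumption, ?_⟩
  convert hasSum_ite_eq 0 (d : ℝ) using 1
  ext k
  split_ifs <;> simp_all

theorem exists_eq_add_mul_of_mem_expansionSet (hr : r ≠ 0) {x : ℝ} (hx : x ∈ expansionSet D r) :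
    ∃ d ∈ D, ∃ y ∈ expansionSet D r, x = d + r * y := by
  obtain ⟨e, he, hsum⟩ := hx
  have htail : HasSum (fun k => (e (k + 1) : ℝ) * r ^ k) (r⁻¹ * (x - e 0)) := by
    have h := ((hasSum_nat_add_iff' 1).2 hsum).mul_left r⁻¹
    rw [Finset.sum_range_one, pow_zero, mul_one] at h
    exact h.congr_fun fun k => by field_simp; ring
  exact ⟨e 0, he 0, _, ⟨fun k => e (k + 1), fun k => he _, htail⟩, by field_simp; ring⟩

theorem expansionSet_subset_of_mapsTo {I : Set ℝ} (hI : IsClosed I) (h0 : (0 : ℝ) ∈ I)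
    (hmaps : ∀ d ∈ D, ∀ y ∈ I, (d : ℝ) + r * y ∈ I) : expansionSet D r ⊆ I := by
  have hpartial : ∀ n (e : ℕ → ℤ), (∀ k, e k ∈ D) →
      ∑ k ∈ Finset.range n, (e k : ℝ) * r ^ k ∈ I := by
    intro n
    induction n with
    | zero => intro e _; simpa using h0
    | succ n ih =>
      intro e he
      convert hmaps _ (he 0) _ (ih (fun k => e (k + 1)) fun k => he _) using 1
      rw [Finset.sum_range_succ', Finset.mul_sum]
      simp only [pow_succ, pow_zero, mul_one]
      rw [add_comm]; congr 1
      exact Finset.sum_congr rfl fun k _ => by ring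
  rintro x ⟨e, he, hsum⟩
  exact hI.mem_of_tendsto hsum.tendsto_sum_nat (.of_forall fun n => hpartial n e he)

/-- Iterating a choice of `y = d + r z` gives digits whose series telescopes to `y`. -/
theorem subset_expansionSet_of_forall_exists {S : Set ℝ} (hS : Bornology.IsBounded S)
    (hr : |r| < 1) (hcover : ∀ y ∈ S, ∃ d ∈ D, ∃ z ∈ S, y = d + r * z) :
    S ⊆ expansionSet D r := by
  choose! dig hdig next hnext hsplit using hcover
  intro x hx
  set Y : ℕ → ℝ := fun n => next^[n] x
  have hY : ∀ n, Y n ∈ S := fun n => MapsTo.iterate hnext n hx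
  have hYsucc : ∀ n, Y (n + 1) = next (Y n) := fun n => Function.iterate_succ_apply' next n x
  obtain ⟨C, hC⟩ := hS.exists_norm_le
  have hsum : Summable fun n => r ^ n * Y n :=
    .of_norm_bounded ((summable_geometric_of_lt_one (abs_nonneg r) hr).mul_left C) fun n => by
      rw [norm_mul, norm_pow, Real.norm_eq_abs, mul_comm]
      exact mul_le_mul_of_nonneg_right (hC _ (hY n)) (by positivity)
  have htel : HasSum (fun n => r ^ n * Y n - r ^ (n + 1) * Y (n + 1)) (Y 0) := by
    simpa using hsum.hasSum.sub ((hasSum_nat_add_iff' 1).2 hsum.hasSum)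
  refine ⟨fun n => dig (Y n), fun n => hdig _ (hY n), ?_⟩
  refine htel.congr_fun fun n => ?_
  rw [hYsucc, pow_succ]
  linear_combination (-r ^ n) * hsplit _ (hY n)

theorem not_isPreconnected_expansionSet {a b u w : ℝ} {N : ℤ} (hr : r ≠ 0)
    (hF : expansionSet D r ⊆ Icc a b) (hD : ∀ d ∈ D, (d : ℝ) ≤ u ∨ w ≤ d)
    (hgap : u + |r| * (b - a) < w) (h0 : 0 ∈ D) (hu : 0 ≤ u) (hN : N ∈ D) (hw : w ≤ N) :
    ¬IsPreconnected (expansionSet D r) := by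
  -- `c` separates the pieces `d + r F` with `d ≤ u` from those with `w ≤ d`.
  set c := (u + w) / 2 + r * ((a + b) / 2) with hc
  have hdev : ∀ y ∈ expansionSet D r, |r * y - r * ((a + b) / 2)| ≤ |r| * (b - a) / 2 := by
    intro y hy
    obtain ⟨h1, h2⟩ := hF hy
    rw [← mul_sub, abs_mul, mul_div_assoc]
    exact mul_le_mul_of_nonneg_left (abs_le.2 ⟨by linarith, by linarith⟩) (abs_nonneg r)
  have hlow : ∀ d : ℤ, (d : ℝ) ≤ u → ∀ y ∈ expansionSet D r, (d : ℝ) + r * y < c :=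
    fun d hd y hy => by linarith [(abs_le.1 (hdev y hy)).2, hc]
  have hhigh : ∀ d : ℤ, w ≤ d → ∀ y ∈ expansionSet D r, c < (d : ℝ) + r * y :=
    fun d hd y hy => by linarith [(abs_le.1 (hdev y hy)).1, hc]
  have h0F : (0 : ℝ) ∈ expansionSet D r := by exact_mod_cast intCast_mem_expansionSet h0 h0
  have hcF : c ∉ expansionSet D r := by
    intro hc
    obtain ⟨d, hd, y, hy, hcy⟩ := exists_eq_add_mul_of_mem_expansionSet hr hc
    rcases hD d hd with h | h
    · exact (hlow d h y hy).ne' hcy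
    · exact (hhigh d h y hy).ne hcy
  intro hpre
  refine hcF (hpre.Icc_subset h0F (intCast_mem_expansionSet hN h0) ⟨?_, ?_⟩)
  · simpa using (hlow 0 (by simpa using hu) 0 h0F).le
  · simpa using (hhigh N hw 0 h0F).le

end Expansion

section Intervals

variable {D : Set ℤ} {r N : ℝ}

theorem expansionSet_subset_Icc_of_nonneg {b : ℝ} (hr : 0 ≤ r)
    (hD : ∀ d ∈ D, (d : ℝ) ∈ Icc 0 N) (hb : N + r * b = b) (hb0 : 0 ≤ b) :
    expansionSet D r ⊆ Icc 0 b :=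
  expansionSet_subset_of_mapsTo isClosed_Icc ⟨le_rfl, hb0⟩ fun d hd y hy => by
    obtain ⟨hd0, hdN⟩ := hD d hd
    have := mul_le_mul_of_nonneg_left hy.2 hr
    exact ⟨by nlinarith [hy.1], by linarith⟩

theorem expansionSet_subset_Icc_of_nonpos {a b : ℝ} (hr : r ≤ 0)
    (hD : ∀ d ∈ D, (d : ℝ) ∈ Icc 0 N) (ha : r * b = a) (hb : N + r * a = b)
    (h0 : (0 : ℝ) ∈ Icc a b) : expansionSet D r ⊆ Icc a b :=
  expansionSet_subset_of_mapsTo isClosed_Icc h0 fun d hd y hy => by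
    obtain ⟨hd0, hdN⟩ := hD d hd
    have := mul_le_mul_of_nonpos_left hy.2 hr
    have := mul_le_mul_of_nonpos_left hy.1 hr
    exact ⟨by linarith, by linarith⟩

/-- The witness is the smallest interval `I` with `d + r I ⊆ I` for all `0 ≤ d ≤ N`. -/
theorem exists_expansionSet_subset_Icc {Q : ℝ} (hQ : 1 < Q) (hr : r = Q⁻¹ ∨ r = -Q⁻¹)
    (hN : 0 ≤ N) (hD : ∀ d ∈ D, (d : ℝ) ∈ Icc 0 N) :
    ∃ a b, expansionSet D r ⊆ Icc a b ∧ |r| * (b - a) = N / (Q - 1) := by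
  have hQ1 : Q - 1 ≠ 0 := by linarith
  have hQ2 : Q ^ 2 - 1 ≠ 0 := by nlinarith
  have hQabs : |Q⁻¹| = Q⁻¹ := abs_of_pos (by positivity)
  rcases hr with rfl | rfl
  · refine ⟨0, N * Q / (Q - 1), expansionSet_subset_Icc_of_nonneg (by positivity) hD ?_ ?_, ?_⟩
    · field_simp; ring
    · have : 0 < Q - 1 := by linarith
      positivity
    · rw [hQabs, sub_zero]; field_simp
  · refine ⟨-(N * Q / (Q ^ 2 - 1)), N * Q ^ 2 / (Q ^ 2 - 1),
      expansionSet_subset_Icc_of_nonpos (by simp; positivity) hD ?_ ?_ ?_, ?_⟩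
    · field_simp
    · field_simp; ring
    · have : 0 < Q ^ 2 - 1 := by nlinarith
      exact ⟨by simp only [Left.neg_nonpos_iff]; positivity, by positivity⟩
    · rw [abs_neg, hQabs]
      field_simp
      ring

theorem exists_mem_Icc_sub_mem_Icc {n : ℤ} (hn : 1 ≤ n) {y : ℝ} (hy : y ∈ Icc 0 (n : ℝ)) :
    ∃ d ∈ Icc 0 (n - 1), y - d ∈ Icc (0 : ℝ) 1 := by
  rcases hy.1.eq_or_lt with rfl | hy0
  · exact ⟨0, ⟨le_rfl, by omega⟩, by simp⟩
  · refine ⟨⌈y⌉ - 1, ⟨?_, ?_⟩, ?_, ?_⟩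
    · have := Int.ceil_pos.2 hy0; omega
    · have := Int.ceil_le.2 hy.2; omega
    · push_cast; linarith [Int.ceil_lt_add_one y]
    · push_cast; linarith [Int.le_ceil y]

theorem expansionSet_Icc_inv {Q : ℤ} (hQ : 2 ≤ Q) :
    expansionSet (Icc 0 (Q - 1)) (Q : ℝ)⁻¹ = Icc 0 (Q : ℝ) := by
  have hQ' : (2 : ℝ) ≤ Q := by exact_mod_cast hQ
  have hD : ∀ d ∈ Icc 0 (Q - 1), (d : ℝ) ∈ Icc 0 ((Q : ℝ) - 1) := fun d hd =>
    ⟨by exact_mod_cast hd.1, by exact_mod_cast hd.2⟩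
  refine (expansionSet_subset_Icc_of_nonneg (by positivity) hD (by field_simp; ring)
    (by positivity)).antisymm (subset_expansionSet_of_forall_exists (Metric.isBounded_Icc _ _)
      (by rw [abs_inv, abs_of_pos (by positivity), inv_lt_one_iff₀]; right; linarith) ?_)
  intro y hy
  obtain ⟨d, hd, h0, h1⟩ := exists_mem_Icc_sub_mem_Icc (by omega) hy
  refine ⟨d, hd, Q * (y - d), ⟨by positivity, by nlinarith⟩, by field_simp; ring⟩

theorem expansionSet_Icc_neg_inv {Q : ℤ} (hQ : 2 ≤ Q) :
    expansionSet (Icc 0 (Q - 1)) (-(Q : ℝ)⁻¹) =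
      Icc (-((Q : ℝ) / (Q + 1))) (Q * (Q / (Q + 1))) := by
  have hQ' : (2 : ℝ) ≤ Q := by exact_mod_cast hQ
  have hD : ∀ d ∈ Icc 0 (Q - 1), (d : ℝ) ∈ Icc 0 ((Q : ℝ) - 1) := fun d hd =>
    ⟨by exact_mod_cast hd.1, by exact_mod_cast hd.2⟩
  set s : ℝ := Q / (Q + 1) with hs
  have hs0 : 0 ≤ s := by positivity
  have hsQ : s * (Q + 1) = Q := by rw [hs]; field_simp
  refine (expansionSet_subset_Icc_of_nonpos (by simp; positivity) hD (by field_simp)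
    (by field_simp; linear_combination (1 - (Q : ℝ)) * hsQ)
    ⟨by linarith, by positivity⟩).antisymm
    (subset_expansionSet_of_forall_exists (Metric.isBounded_Icc _ _)
      (by rw [abs_neg, abs_inv, abs_of_pos (by positivity), inv_lt_one_iff₀]; right; linarith) ?_)
  intro y hy
  obtain ⟨d, hd, h0, h1⟩ := exists_mem_Icc_sub_mem_Icc (n := Q) (y := y + s) (by omega)
    ⟨by linarith [hy.1], by linarith [hy.2]⟩
  refine ⟨d, hd, Q * (d - y), ⟨by nlinarith, by nlinarith⟩, by field_simp; ring⟩

end Intervals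

theorem isConnected_expansionSet_iff {Q m : ℤ} {r : ℝ} (hQ : 3 ≤ Q)
    (hr : r = (Q : ℝ)⁻¹ ∨ r = -(Q : ℝ)⁻¹) (hm : -1 ≤ m) :
    IsConnected (expansionSet (Icc 0 (Q - 2) ∪ {Q + m}) r) ↔ m = -1 := by
  have hQ' : (3 : ℝ) ≤ Q := by exact_mod_cast hQ
  constructor
  · intro hconn
    by_contra hm1
    have hm0 : 0 ≤ m := by omega
    have hm0' : (0 : ℝ) ≤ m := by exact_mod_cast hm0
    obtain ⟨a, b, hF, hlen⟩ := exists_expansionSet_subset_Icc (D := Icc 0 (Q - 2) ∪ {Q + m})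
      (N := ((Q + m : ℤ) : ℝ)) (by linarith) hr (by push_cast; linarith) fun d hd => by
        rcases hd with hd | rfl
        · exact ⟨by exact_mod_cast hd.1,
            by exact_mod_cast (show d ≤ Q + m by linarith [hd.2])⟩
        · exact ⟨by push_cast; linarith, le_rfl⟩
    have hgap : ((Q - 2 : ℤ) : ℝ) + |r| * (b - a) < ((Q + m : ℤ) : ℝ) := by
      have : ((Q : ℝ) + m) / (Q - 1) < m + 2 := by
        rw [div_lt_iff₀ (by linarith)]
        nlinarith
      rw [hlen]
      push_cast
      linarith
    have hr0 : r ≠ 0 := by rcases hr with rfl | rfl <;> simp <;> positivity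
    refine not_isPreconnected_expansionSet hr0 hF ?_ hgap (.inl ⟨le_rfl, by omega⟩)
      (by exact_mod_cast (show (0 : ℤ) ≤ Q - 2 by omega)) (.inr rfl) le_rfl hconn.isPreconnected
    rintro d (hd | rfl)
    · exact .inl (by exact_mod_cast hd.2)
    · exact .inr le_rfl
  · rintro rfl
    have hD : Icc 0 (Q - 2) ∪ {Q + -1} = Icc 0 (Q - 1) := by
      ext d
      simp only [mem_union, mem_Icc, mem_singleton_iff]
      omega
    rw [hD]
    rcases hr with rfl | rfl
    · rw [expansionSet_Icc_inv (by omega)]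
      exact isConnected_Icc (by positivity)
    · rw [expansionSet_Icc_neg_inv (by omega)]
      have : (0 : ℝ) ≤ (Q : ℝ) / (Q + 1) := by positivity
      exact isConnected_Icc (by nlinarith)

section Matrices

variable {K n : Type*} [Field K] [Fintype n] [DecidableEq n] {M : Matrix n n K} {c : K}

theorem Matrix.sq_eq_neg_smul_one_of_charpoly_eq (h : M.charpoly = X ^ 2 + C c) :
    M ^ 2 = -c • 1 := by
  have := M.aeval_self_charpoly
  rw [h, map_add, aeval_X_pow, aeval_C, Algebra.algebraMap_eq_smul_one] at this
  rw [neg_smul]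
  exact eq_neg_of_add_eq_zero_left this

theorem Matrix.mul_inv_smul_self_eq_one (hc : c ≠ 0) (h : M ^ 2 = c • 1) :
    M * (c⁻¹ • M) = 1 := by
  rw [Matrix.mul_smul, ← sq, h, smul_smul, inv_mul_cancel₀ hc, one_smul]

theorem Matrix.inv_sq_eq_inv_smul_one (hc : c ≠ 0) (h : M ^ 2 = c • 1) :
    M⁻¹ ^ 2 = c⁻¹ • 1 := by
  rw [Matrix.inv_eq_right_inv (Matrix.mul_inv_smul_self_eq_one hc h), _root_.smul_pow, h, smul_smul]
  congr 1
  field_simp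

theorem Matrix.linearIndependent_inv_mulVec_pair (hM : IsUnit M.det) {u : n → K}
    (h : LinearIndependent K ![u, M *ᵥ u]) :
    LinearIndependent K ![M⁻¹ *ᵥ u, M⁻¹ ^ 2 *ᵥ u] := by
  rw [LinearIndependent.pair_iff] at h ⊢
  intro s t hst
  have h1 : M ^ 2 * M⁻¹ = M := by rw [sq, mul_assoc, Matrix.mul_nonsing_inv M hM, mul_one]
  have h2 : M ^ 2 * M⁻¹ ^ 2 = 1 := by
    rw [sq, sq, mul_assoc, ← mul_assoc M M⁻¹, Matrix.mul_nonsing_inv M hM, one_mul,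
      Matrix.mul_nonsing_inv M hM]
  have := congrArg (M ^ 2 *ᵥ ·) hst
  simp only [Matrix.mulVec_add, Matrix.mulVec_smul, Matrix.mulVec_mulVec, h1, h2,
    Matrix.one_mulVec, Matrix.mulVec_zero] at this
  exact (h t s (by rw [add_comm]; exact this)).symm

end Matrices

theorem toR_sq {A : Matrix (Fin 2) (Fin 2) ℤ} {q : ℤ} (hchar : A.charpoly = X ^ 2 + C q) :
    toR A ^ 2 = -(q : ℝ) • 1 :=
  Matrix.sq_eq_neg_smul_one_of_charpoly_eq (by
    rw [toR, show (Int.cast : ℤ → ℝ) = Int.castRingHom ℝ from rfl, Matrix.charpoly_map,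
      hchar]
    simp)

theorem hasSum_intCast_smul_pow_succ_mulVec {ι : Type*} [Fintype ι] [DecidableEq ι]
    {B : Matrix ι ι ℝ} {r : ℝ} (hB : B ^ 2 = r • 1) (u : ι → ℝ) {e : ℕ → ℤ} {s t : ℝ}
    (hs : HasSum (fun k => (e (2 * k) : ℝ) * r ^ k) s)
    (ht : HasSum (fun k => (e (2 * k + 1) : ℝ) * r ^ k) t) :
    HasSum (fun i => (e i : ℝ) • (B ^ (i + 1)) *ᵥ u) (s • (B *ᵥ u) + t • (B ^ 2 *ᵥ u)) := by
  have hpow : ∀ k, B ^ (2 * k) = r ^ k • 1 := fun k => by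
    rw [pow_mul, hB, _root_.smul_pow, one_pow]
  refine HasSum.even_add_odd ?_ ?_
  · refine (hs.smul_const (B *ᵥ u)).congr_fun fun k => ?_
    rw [pow_succ, hpow, Matrix.smul_mul, one_mul, Matrix.smul_mulVec, smul_smul]
  · refine (ht.smul_const (B ^ 2 *ᵥ u)).congr_fun fun k => ?_
    rw [show 2 * k + 1 + 1 = 2 * k + 2 by ring, pow_add, hpow, Matrix.smul_mul, one_mul,
      Matrix.smul_mulVec, smul_smul]

theorem attractor_eq_image {A : Matrix (Fin 2) (Fin 2) ℤ} {D : Set ℤ} (hD : D.Finite) {r : ℝ}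
    (hr : |r| < 1) (hB : (toR A)⁻¹ ^ 2 = r • 1) (v : Fin 2 → ℤ) :
    attractor A D v =
      (fun p : ℝ × ℝ => p.1 • ((toR A)⁻¹ *ᵥ vecR v) + p.2 • ((toR A)⁻¹ ^ 2 *ᵥ vecR v)) ''
        (expansionSet D r ×ˢ expansionSet D r) := by
  obtain ⟨C, hC⟩ := (hD.image fun d : ℤ => |(d : ℝ)|).bddAbove
  have hbound : ∀ e : ℕ → ℤ, (∀ k, e k ∈ D) → ∀ k, |(e k : ℝ)| ≤ C :=
    fun e he k => hC ⟨e k, he k, rfl⟩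
  ext x
  constructor
  · rintro ⟨e, he, hx⟩
    obtain ⟨s, hs⟩ := summable_intCast_mul_pow hr fun k => hbound e he (2 * k)
    obtain ⟨t, ht⟩ := summable_intCast_mul_pow hr fun k => hbound e he (2 * k + 1)
    exact ⟨(s, t), ⟨⟨_, fun k => he _, hs⟩, ⟨_, fun k => he _, ht⟩⟩,
      (hasSum_intCast_smul_pow_succ_mulVec hB _ hs ht).unique hx⟩
  · rintro ⟨⟨s, t⟩, ⟨⟨e, he, hs⟩, ⟨f, hf, ht⟩⟩, rfl⟩
    let d : ℕ → ℤ := fun i => if i % 2 = 0 then e (i / 2) else f (i / 2)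
    have heven : ∀ k, d (2 * k) = e k := fun k => by simp [d]
    have hodd : ∀ k, d (2 * k + 1) = f k := fun k => by
      simp [d, Nat.add_mod, show (2 * k + 1) / 2 = k by omega]
    refine ⟨d, fun i => ?_, hasSum_intCast_smul_pow_succ_mulVec hB _ (by simpa [heven] using hs)
      (by simpa [hodd] using ht)⟩
    dsimp only [d]
    split_ifs
    exacts [he _, hf _]

theorem exists_continuous_apply_smul_add_smul {E : Type*} [NormedAddCommGroup E] [NormedSpace ℝ E]
    [FiniteDimensional ℝ E] (hE : Module.finrank ℝ E = 2) {x y : E}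
    (h : LinearIndependent ℝ ![x, y]) :
    ∃ φ : E → ℝ, Continuous φ ∧ ∀ s t : ℝ, φ (s • x + t • y) = s := by
  have hcard : Fintype.card (Fin 2) = Module.finrank ℝ E := by simp [hE]
  set b := basisOfLinearIndependentOfCardEqFinrank h hcard
  have hb : ⇑b = ![x, y] := coe_basisOfLinearIndependentOfCardEqFinrank h hcard
  refine ⟨b.coord 0, LinearMap.continuous_of_finiteDimensional _, fun s t => ?_⟩
  have hx : x = b 0 := by simp [hb]
  have hy : y = b 1 := by simp [hb]
  simp [hx, hy, Module.Basis.coord_apply]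

theorem isConnected_image_prod_self_iff {X Y : Type*} [TopologicalSpace X] [TopologicalSpace Y]
    {g : X × X → Y} {φ : Y → X} (hg : Continuous g) (hφ : Continuous φ)
    (hφg : ∀ p, φ (g p) = p.1) {S : Set X} : IsConnected (g '' (S ×ˢ S)) ↔ IsConnected S := by
  refine ⟨fun h => ?_, fun h => (h.prod h).image g hg.continuousOn⟩
  obtain ⟨_, p, hp, -⟩ := h.nonempty
  have hS : φ '' (g '' (S ×ˢ S)) = S := by
    rw [image_image]
    simp only [hφg]
    exact fst_image_prod S ⟨p.2, hp.2⟩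
  exact hS ▸ h.image φ hφ.continuousOn

theorem stmt12_general (A : Matrix (Fin 2) (Fin 2) ℤ) (q m : ℤ)
    (hchar : A.charpoly = X ^ 2 + C q)
    (hq : 3 ≤ |q|)
    (hm : -1 ≤ m)
    (v : Fin 2 → ℤ)
    (hv : LinearIndependent ℝ ![vecR v, (toR A).mulVec (vecR v)]) :
    IsConnected (attractor A (Set.Icc (0 : ℤ) (|q| - 2) ∪ {|q| + m}) v) ↔ m = -1 := by
  have hq0 : -(q : ℝ) ≠ 0 := by
    have : q ≠ 0 := by rintro rfl; simp at hq
    exact neg_ne_zero.2 (Int.cast_ne_zero.2 this)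
  have hr : (-(q : ℝ))⁻¹ = ((|q| : ℤ) : ℝ)⁻¹ ∨
      (-(q : ℝ))⁻¹ = -((|q| : ℤ) : ℝ)⁻¹ := by
    rcases abs_choice q with h | h <;> rw [h]
    · exact .inr (inv_neg ..)
    · exact .inl (by push_cast; rfl)
  have hr1 : |(-(q : ℝ))⁻¹| < 1 := by
    rw [abs_inv, abs_neg, ← Int.cast_abs]
    exact inv_lt_one_of_one_lt₀ (by exact_mod_cast (show 1 < |q| by omega))
  have hsq := toR_sq hchar
  obtain ⟨φ, hφ, hφg⟩ := exists_continuous_apply_smul_add_smul (by simp)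
    (Matrix.linearIndependent_inv_mulVec_pair
      (Matrix.isUnit_det_of_right_inverse (Matrix.mul_inv_smul_self_eq_one hq0 hsq)) hv)
  rw [attractor_eq_image ((finite_Icc _ _).union (finite_singleton _)) hr1
    (Matrix.inv_sq_eq_inv_smul_one hq0 hsq), isConnected_image_prod_self_iff (by fun_prop) hφ
    fun p => hφg p.1 p.2]
  exact isConnected_expansionSet_iff hq hr hm

/-- when `p = 0` (characteristic polynomial `x² + q`, `|q| ≥ 3`) and
`m ≥ -1`, the fractal with digit set `{0, 1, …, |q|-2, |q|+m} v` is connected iff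
`m = -1`, i.e. iff the digit set is `{0, 1, …, |q|-1} v`. -/
theorem stmt12 (A : Matrix (Fin 2) (Fin 2) ℤ) (q m : ℤ)
    (hA : IsExpanding A)
    (hchar : A.charpoly = X ^ 2 + C q)
    (hq : 3 ≤ |q|)
    (hm : -1 ≤ m)
    (v : Fin 2 → ℤ)
    (hv : LinearIndependent ℝ ![vecR v, (toR A).mulVec (vecR v)]) :
    IsConnected (attractor A (Set.Icc (0 : ℤ) (|q| - 2) ∪ {|q| + m}) v) ↔ m = -1 :=
  stmt12_general A q m hchar hq hm v hv
end
end
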